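/- arXiv:2412.00593 — 9 statements merged into one kernel-verified Lean document; each statement's English description precedes it below -/
import Mathlib

section
/- Define h_q(x) = T_q(qx) · ∏_{j=1}^q (1 - jx), where T_q is the Chebyshev polynomial of the first kind of degree q. Then h_q has degree at most 2q, |h_q(1/N)| ≤ 1 for all positive integers N, and there exists a universal constant c > 0 such that the supremum of |h_q| on [0, c/q] is at least 2^q for all q. -/
/-!
Away from the nodes `1/N`, the factor `∏ (1 - jx)` is not small: at `x = 2/(2k+1)`, whose
reciprocal lies halfway between two integers, its factors are `|2k+1-2j|/(2k+1)`, whose product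
is at least `k! (q-k)! / (2k+1)^q`. Since `qx ≥ 1` there, the Chebyshev factor is at least
`(qx)^q`, and for `k = ⌊q/8⌋` (so that `x ≤ 16/q`) the crude bounds `q! ≤ 2^q k! (q-k)!` and
`q^q ≤ 3^q q!` make the product of the two at least `2^q`. At the nodes themselves either some
factor `1 - jx` vanishes, or `qx ≤ 1` and both factors have modulus at most one.
-/

open Polynomial Finset
open scoped Nat

noncomputable def hPoly (q : ℕ) : Polynomial ℝ :=
  ((Polynomial.Chebyshev.T ℝ (q : ℤ)).comp (Polynomial.C (q : ℝ) * Polynomial.X)) *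
    ∏ j ∈ Finset.Icc 1 q, (1 - Polynomial.C (j : ℝ) * Polynomial.X)

namespace Real

theorem cosh_pow_le_cosh_nat_mul {θ : ℝ} (hθ : 0 ≤ θ) (n : ℕ) :
    cosh θ ^ n ≤ cosh (n * θ) := by
  induction n with
  | zero => simp
  | succ n ih =>
    have h_sinh : 0 ≤ sinh (n * θ) * sinh θ :=
      mul_nonneg (sinh_nonneg_iff.mpr (by positivity)) (sinh_nonneg_iff.mpr hθ)
    calc cosh θ ^ (n + 1) = cosh θ ^ n * cosh θ := pow_succ _ _
      _ ≤ cosh (n * θ) * cosh θ := by gcongr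
      _ ≤ cosh ((n + 1 : ℕ) * θ) := by
        rw [Nat.cast_succ, add_one_mul, cosh_add]; linarith

end Real

theorem Polynomial.Chebyshev.pow_le_eval_T_real {y : ℝ} (hy : 1 ≤ y) (n : ℕ) :
    y ^ n ≤ (T ℝ n).eval y := by
  rw [← Real.cosh_arcosh hy, T_real_cosh]
  exact_mod_cast Real.cosh_pow_le_cosh_nat_mul (Real.arcosh_nonneg hy) n

theorem factorial_le_prod_range_two_mul_add_one (m : ℕ) :
    (m ! : ℝ) ≤ ∏ i ∈ range m, (2 * (i : ℝ) + 1) := by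
  rw [← prod_range_add_one_eq_factorial, Nat.cast_prod]
  exact prod_le_prod (fun i _ => by positivity) (fun i _ => by push_cast; linarith)

theorem factorial_mul_factorial_le_prod_abs (k m : ℕ) :
    (k ! * m ! : ℝ) ≤ ∏ i ∈ range (k + m), |2 * (k : ℝ) - 1 - 2 * i| := by
  induction k with
  | zero =>
    rw [Nat.factorial_zero, Nat.cast_one, one_mul, zero_add]
    convert factorial_le_prod_range_two_mul_add_one m using 2 with i
    rw [Nat.cast_zero, abs_of_nonpos (by linarith [(i.cast_nonneg : (0 : ℝ) ≤ i)])]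
    ring
  | succ k ih =>
    have h_shift : ∀ i : ℕ, |2 * ((k + 1 : ℕ) : ℝ) - 1 - 2 * ((i + 1 : ℕ) : ℝ)| =
        |2 * (k : ℝ) - 1 - 2 * i| := fun i => by push_cast; ring_nf
    rw [add_right_comm, prod_range_succ']
    simp only [h_shift, Nat.factorial_succ, Nat.cast_mul, Nat.cast_zero, mul_zero, sub_zero]
    rw [abs_of_pos (by push_cast; linarith [(k.cast_nonneg : (0 : ℝ) ≤ k)])]
    calc ((k + 1 : ℕ) : ℝ) * k ! * m ! = (k ! * m !) * (k + 1) := by push_cast; ring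
      _ ≤ (∏ i ∈ range (k + m), |2 * (k : ℝ) - 1 - 2 * i|) * (2 * (k + 1 : ℕ) - 1) := by
        gcongr; push_cast; linarith

theorem pow_le_three_pow_mul_factorial (n : ℕ) : (n : ℝ) ^ n ≤ 3 ^ n * n ! := by
  have h := Real.pow_div_factorial_le_exp (n : ℝ) n.cast_nonneg n
  rw [div_le_iff₀ (by positivity), ← mul_one (n : ℝ), Real.exp_nat_mul, mul_one] at h
  exact h.trans (by gcongr; exact Real.exp_one_lt_three.le)

theorem factorial_le_two_pow_mul_factorial_mul_factorial {k n : ℕ} (h : k ≤ n) :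
    n ! ≤ 2 ^ n * (k ! * (n - k)!) := by
  rw [← Nat.choose_mul_factorial_mul_factorial h, mul_assoc]
  exact Nat.mul_le_mul_right _ (Nat.choose_le_two_pow n k)

theorem odd_sq_pow_le_pow_mul_factorial_mul_factorial {k q : ℕ} (h : 8 * k ≤ q) :
    (((2 * k + 1) ^ 2) ^ q : ℝ) ≤ q ^ q * (k ! * (q - k)!) := by
  rcases Nat.eq_zero_or_pos k with rfl | hk
  · have h_pos : (1 : ℝ) ≤ q ^ q * q ! := by
      exact_mod_cast Nat.mul_pos Nat.pow_self_pos q.factorial_pos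
    simpa using h_pos
  have h_fact : (q ! : ℝ) ≤ 2 ^ q * (k ! * (q - k)!) := by
    exact_mod_cast factorial_le_two_pow_mul_factorial_mul_factorial (by omega : k ≤ q)
  have h_base : 6 * ((2 * k + 1) ^ 2 : ℝ) ≤ q ^ 2 := by
    have : (8 * k : ℝ) ≤ q := by exact_mod_cast h
    have : (1 : ℝ) ≤ k := by exact_mod_cast hk
    nlinarith
  refine le_of_mul_le_mul_right ?_ (by positivity : (0 : ℝ) < 6 ^ q)
  calc (((2 * k + 1) ^ 2) ^ q : ℝ) * 6 ^ q ≤ (q ^ 2) ^ q := by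
        rw [← mul_pow, mul_comm]; gcongr
    _ = q ^ q * q ^ q := by ring
    _ ≤ q ^ q * (3 ^ q * q !) := by gcongr; exact pow_le_three_pow_mul_factorial q
    _ ≤ q ^ q * (3 ^ q * (2 ^ q * (k ! * (q - k)!))) := by gcongr
    _ = q ^ q * (k ! * (q - k)!) * 6 ^ q := by rw [show (6 : ℝ) = 3 * 2 by norm_num, mul_pow]; ring

theorem eval_hPoly (q : ℕ) (x : ℝ) :
    (hPoly q).eval x = (Chebyshev.T ℝ q).eval (q * x) * ∏ j ∈ Icc 1 q, (1 - j * x) := by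
  simp [hPoly, eval_prod]

theorem natDegree_hPoly_le (q : ℕ) : (hPoly q).natDegree ≤ 2 * q := by
  have h_linear : ∀ c : ℝ, (C c * X).natDegree ≤ 1 := fun c =>
    (natDegree_C_mul_le c X).trans natDegree_X_le
  have h_T : ((Chebyshev.T ℝ q).comp (C (q : ℝ) * X)).natDegree ≤ q := by
    refine natDegree_comp_le.trans ?_
    rw [Chebyshev.natDegree_T, Int.natAbs_natCast]
    simpa using Nat.mul_le_mul_left q (h_linear q)
  have h_prod : (∏ j ∈ Icc 1 q, (1 - C (j : ℝ) * X)).natDegree ≤ q := by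
    refine (natDegree_prod_le _ _).trans ?_
    refine (sum_le_card_nsmul _ _ 1 fun j _ => ?_).trans (by simp)
    exact (natDegree_sub_le _ _).trans (max_le (by simp) (h_linear j))
  exact natDegree_mul_le.trans (by omega)

theorem abs_eval_hPoly_one_div_le_one (q : ℕ) {N : ℕ} (hN : 0 < N) :
    |(hPoly q).eval (1 / (N : ℝ))| ≤ 1 := by
  have hN' : (0 : ℝ) < N := by exact_mod_cast hN
  rw [eval_hPoly, abs_mul]
  rcases le_or_gt N q with hNq | hqN
  · rw [prod_eq_zero (mem_Icc.mpr ⟨hN, hNq⟩) (by field_simp; ring)]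
    simp
  have h_le : ∀ j ≤ q, 0 ≤ (j : ℝ) * (1 / N) ∧ (j : ℝ) * (1 / N) ≤ 1 := fun j hj => by
    refine ⟨by positivity, ?_⟩
    rw [mul_one_div, div_le_one hN']
    exact_mod_cast hj.trans hqN.le
  have h_T : |(Chebyshev.T ℝ q).eval ((q : ℝ) * (1 / N))| ≤ 1 := by
    obtain ⟨h₀, h₁⟩ := h_le q le_rfl
    exact Chebyshev.abs_eval_T_real_le_one _ (abs_le.mpr ⟨by linarith, h₁⟩)
  have h_prod : |∏ j ∈ Icc 1 q, (1 - j * (1 / N : ℝ))| ≤ 1 := by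
    rw [abs_prod]
    refine prod_le_one (fun _ _ => abs_nonneg _) fun j hj => ?_
    obtain ⟨h₀, h₁⟩ := h_le j (mem_Icc.mp hj).2
    exact abs_le.mpr ⟨by linarith, by linarith⟩
  simpa using mul_le_mul h_T h_prod (abs_nonneg _) zero_le_one

theorem prod_abs_one_sub_mul_two_div_ge {k q : ℕ} (hkq : k ≤ q) :
    (k ! * (q - k)! : ℝ) / (2 * k + 1) ^ q ≤ ∏ j ∈ Icc 1 q, |1 - j * (2 / (2 * k + 1) : ℝ)| := by
  have h_odd : (0 : ℝ) < 2 * k + 1 := by positivity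
  have h_term : ∀ i : ℕ, |1 - ((1 + i : ℕ) : ℝ) * (2 / (2 * k + 1))| =
      |2 * (k : ℝ) - 1 - 2 * i| / (2 * k + 1) := fun i => by
    rw [← abs_of_pos h_odd, ← abs_div, abs_of_pos h_odd]
    congr 1; field_simp; push_cast; ring
  rw [← Ico_add_one_right_eq_Icc, prod_Ico_eq_prod_range, Nat.add_sub_cancel]
  simp only [h_term, prod_div_distrib, prod_const, card_range]
  gcongr
  simpa [Nat.add_sub_cancel' hkq] using factorial_mul_factorial_le_prod_abs k (q - k)

theorem two_pow_le_abs_eval_hPoly {q : ℕ} (hq : 0 < q) :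
    2 ^ q ≤ |(hPoly q).eval (2 / (2 * (q / 8 : ℕ) + 1) : ℝ)| := by
  set k := q / 8
  have hk : 8 * k ≤ q := Nat.mul_div_le q 8
  have h_odd : (0 : ℝ) < 2 * k + 1 := by positivity
  have h_arg : 1 ≤ (q : ℝ) * (2 / (2 * k + 1)) := by
    rw [mul_div_assoc', le_div_iff₀ h_odd]
    exact_mod_cast (by omega : 1 * (2 * k + 1) ≤ q * 2)
  have h_T := (Chebyshev.pow_le_eval_T_real h_arg q).trans (le_abs_self _)
  have h_prod := prod_abs_one_sub_mul_two_div_ge (by omega : k ≤ q)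
  rw [eval_hPoly, abs_mul, abs_prod]
  refine le_trans ?_ (mul_le_mul h_T h_prod (by positivity) (abs_nonneg _))
  calc (2 : ℝ) ^ q = 2 ^ q * ((2 * k + 1) ^ 2) ^ q / ((2 * k + 1) ^ 2) ^ q := by field_simp
    _ ≤ 2 ^ q * (q ^ q * (k ! * (q - k)!)) / ((2 * k + 1) ^ 2) ^ q := by
      gcongr; exact odd_sq_pow_le_pow_mul_factorial_mul_factorial hk
    _ = ((q : ℝ) * (2 / (2 * k + 1))) ^ q * (k ! * (q - k)! / (2 * k + 1) ^ q) := by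
      rw [mul_div_assoc', mul_pow, div_pow, ← pow_right_comm]
      field_simp

/-- **Optimality of interpolation from `1/N` samples.**  The polynomial `h_q` has degree
at most `2q`, satisfies `|h_q(1/N)| ≤ 1` for all positive integers `N`, and yet there is
a universal constant `c > 0` so that `sup_{[0, c/q]} |h_q| ≥ 2^q` for all `q ≥ 1`. -/
theorem stmt_1 :
    (∀ q : ℕ, (hPoly q).natDegree ≤ 2 * q) ∧
    (∀ q : ℕ, ∀ N : ℕ, 0 < N → |(hPoly q).eval (1 / (N : ℝ))| ≤ 1) ∧
    (∃ c : ℝ, 0 < c ∧ ∀ q : ℕ, 0 < q →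
      ∃ x ∈ Set.Icc (0 : ℝ) (c / (q : ℝ)), (2 : ℝ) ^ q ≤ |(hPoly q).eval x|) := by
  refine ⟨natDegree_hPoly_le, fun q N hN => abs_eval_hPoly_one_div_le_one q hN,
    16, by norm_num, fun q hq => ⟨_, ⟨by positivity, ?_⟩, two_pow_le_abs_eval_hPoly hq⟩⟩
  have h_floor : q < 8 * (q / 8) + 8 := Nat.lt_mul_div_succ q (by norm_num)
  rw [div_le_div_iff₀ (by positivity) (by exact_mod_cast hq)]
  exact_mod_cast (by omega : 2 * q ≤ 16 * (2 * (q / 8) + 1))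
end

section
/- For any real polynomial h of degree at most q, any K > 0, and any real x with |x| > K, we have |h(x)| ≤ (2|x|/K)^q · sup_{|y| ≤ K} |h(y)|. -/
open Polynomial Chebyshev in
lemma cheb_growth (t : ℝ) (ht : 1 ≤ t) : ∀ n : ℕ,
    0 ≤ (Polynomial.Chebyshev.T ℝ n).eval t ∧
    (Polynomial.Chebyshev.T ℝ n).eval t ≤ (Polynomial.Chebyshev.T ℝ (n+1)).eval t ∧
    (Polynomial.Chebyshev.T ℝ (n+1)).eval t ≤ 2*t*(Polynomial.Chebyshev.T ℝ n).eval t := by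
  have ht0 : (0:ℝ) ≤ t := le_trans zero_le_one ht
  intro n
  induction n with
  | zero =>
    simp
    exact ⟨ht, by linarith⟩
  | succ n ih =>
    obtain ⟨h0, h1, h2⟩ := ih
    have e2 : (Polynomial.Chebyshev.T ℝ ((n:ℤ)+1+1)).eval t
        = 2*t*(Polynomial.Chebyshev.T ℝ ((n:ℤ)+1)).eval t - (Polynomial.Chebyshev.T ℝ n).eval t := by
      have := Polynomial.Chebyshev.T_add_two ℝ (n:ℤ)
      rw [show ((n:ℤ)+1+1) = (n:ℤ)+2 by ring, this]
      simp
    refine ⟨le_trans h0 h1, ?_, ?_⟩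
    · push_cast
      rw [e2]
      nlinarith
    · push_cast
      rw [show ((n:ℤ)+1+1) = ((n:ℤ)+1)+1 by ring]
      have e3 : (Polynomial.Chebyshev.T ℝ ((n:ℤ)+1+1)).eval t
          = 2*t*(Polynomial.Chebyshev.T ℝ ((n:ℤ)+1)).eval t - (Polynomial.Chebyshev.T ℝ n).eval t := e2
      rw [show ((n:ℤ)+1)+1 = (n:ℤ)+1+1 by ring, e2]
      linarith

lemma cheb_le (t : ℝ) (ht : 1 ≤ t) (n : ℕ) :
    (Polynomial.Chebyshev.T ℝ n).eval t ≤ (2*t)^n := by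
  induction n with
  | zero => simp
  | succ n ih =>
    have h := cheb_growth t ht n
    have h2 := h.2.2
    have h0 := h.1
    have ht0 : (0:ℝ) ≤ 2*t := by linarith
    calc (Polynomial.Chebyshev.T ℝ (n+1:ℕ)).eval t = (Polynomial.Chebyshev.T ℝ ((n:ℤ)+1)).eval t := by push_cast; ring_nf
      _ ≤ 2*t*(Polynomial.Chebyshev.T ℝ n).eval t := h2
      _ ≤ 2*t*(2*t)^n := by nlinarith [h.1]
      _ = (2*t)^(n+1) := by ring

lemma natDegree_T_le' : ∀ n : ℕ, (Polynomial.Chebyshev.T ℝ n).natDegree ≤ n ∧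
    (Polynomial.Chebyshev.T ℝ (n+1)).natDegree ≤ n+1 := by
  intro n
  induction n with
  | zero => constructor <;> simp
  | succ n ih =>
    refine ⟨ih.2, ?_⟩
    have e2 : (Polynomial.Chebyshev.T ℝ ((n:ℤ)+1+1)) =
        2 * Polynomial.X * Polynomial.Chebyshev.T ℝ ((n:ℤ)+1) - Polynomial.Chebyshev.T ℝ n := by
      have := Polynomial.Chebyshev.T_add_two ℝ (n:ℤ)
      rw [show ((n:ℤ)+1+1) = (n:ℤ)+2 by ring, this]
    push_cast
    rw [e2]
    refine le_trans (Polynomial.natDegree_sub_le _ _) ?_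
    simp only [max_le_iff]
    constructor
    · refine le_trans (Polynomial.natDegree_mul_le) ?_
      have : (2 * Polynomial.X : Polynomial ℝ).natDegree ≤ 1 := by
        refine le_trans (Polynomial.natDegree_mul_le) ?_
        simp
      have h2 := ih.2
      push_cast at h2
      omega
    · exact le_trans ih.1 (by omega)

lemma natDegree_T_le (n : ℕ) : (Polynomial.Chebyshev.T ℝ n).natDegree ≤ n := (natDegree_T_le' n).1

open Real Finset in
lemma pos_case (q : ℕ) (hq0 : 0 < q) (h : Polynomial ℝ) (hq : h.natDegree ≤ q)
    (K : ℝ) (hK : 0 < K) (B : ℝ) (hB : ∀ y : ℝ, |y| ≤ K → |h.eval y| ≤ B)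
    (x : ℝ) (hx : K < x) :
    |h.eval x| ≤ (Polynomial.Chebyshev.T ℝ q).eval (K⁻¹ * x) * B := by
  have hqR : (q:ℝ) ≠ 0 := Nat.cast_ne_zero.mpr hq0.ne'
  set v : Fin (q+1) → ℝ := fun i => K * Real.cos (i * π / q) with hv
  -- v is strictly decreasing
  have hanti : StrictAnti v := by
    intro i j hij
    have hpi := Real.pi_pos
    have hθ : ∀ k : Fin (q+1), (k:ℝ) * π / q ∈ Set.Icc 0 π := by
      intro k
      constructor
      · positivity
      · rw [div_le_iff₀ (by positivity)]
        have : (k:ℝ) ≤ q := by exact_mod_cast Nat.lt_succ_iff.mp k.isLt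
        nlinarith
    have : Real.cos ((j:ℝ) * π / q) < Real.cos ((i:ℝ) * π / q) := by
      apply Real.strictAntiOn_cos (hθ i) (hθ j)
      have : (i:ℝ) < j := by exact_mod_cast hij
      have : (i:ℝ) * π < (j:ℝ) * π := by
        have hij' : (i:ℝ) < j := by exact_mod_cast hij
        nlinarith
      apply div_lt_div_of_pos_right this (by positivity)
    exact (mul_lt_mul_iff_right₀ hK).mpr this
  have hinj : Set.InjOn v (univ : Finset (Fin (q+1))) := hanti.injective.injOn
  have hvK : ∀ j, |v j| ≤ K := by
    intro j
    rw [hv, abs_mul, abs_of_pos hK]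
    nlinarith [Real.abs_cos_le_one ((j:ℝ) * π / q), hK]
  have hxv : ∀ j, 0 < x - v j := by
    intro j
    have := hvK j
    have := abs_le.mp this
    linarith [this.2]
  have hcard : #(univ : Finset (Fin (q+1))) = q+1 := by simp
  have hdegh : h.degree < (#(univ : Finset (Fin (q+1))) : WithBot ℕ) := by
    rw [hcard]
    exact lt_of_le_of_lt Polynomial.degree_le_natDegree
      (by exact_mod_cast Nat.lt_succ_of_le hq)
  set T' : Polynomial ℝ :=
    (Polynomial.Chebyshev.T ℝ q).comp (Polynomial.C K⁻¹ * Polynomial.X) with hT'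
  have hT'natdeg : T'.natDegree ≤ q := by
    rw [hT', Polynomial.natDegree_comp,
      Polynomial.natDegree_C_mul (inv_ne_zero hK.ne'), Polynomial.natDegree_X, mul_one]
    exact natDegree_T_le q
  have hT'deg : T'.degree < (#(univ : Finset (Fin (q+1))) : WithBot ℕ) := by
    rw [hcard]
    exact lt_of_le_of_lt Polynomial.degree_le_natDegree
      (by exact_mod_cast Nat.lt_succ_of_le hT'natdeg)
  have hT'evalgen : ∀ y : ℝ, T'.eval y = (Polynomial.Chebyshev.T ℝ q).eval (K⁻¹ * y) := by
    intro y; rw [hT']; simp [Polynomial.eval_comp]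
  have hT'eval : ∀ i : Fin (q+1), T'.eval (v i) = (-1)^(i:ℕ) := by
    intro i
    rw [hT'evalgen, hv]
    have : K⁻¹ * (K * Real.cos ((i:ℝ) * π / q)) = Real.cos ((i:ℝ) * π / q) := by
      field_simp
    rw [this, Polynomial.Chebyshev.T_real_cos]
    have : ((q:ℤ):ℝ) * ((i:ℝ) * π / q) = (i:ℝ) * π := by
      push_cast; field_simp
    rw [this]
    have := Real.cos_nat_mul_pi_sub 0 (i:ℕ)
    simpa using this
  have hkey : h = Lagrange.interpolate univ v (fun i => h.eval (v i)) :=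
    Lagrange.eq_interpolate hinj hdegh
  have hT'key : T' = Lagrange.interpolate univ v (fun i => (-1)^(i:ℕ)) :=
    Lagrange.eq_interpolate_of_eval_eq _ hinj hT'deg (fun i _ => hT'eval i)
  -- sign of the basis polynomials at x
  have hsign : ∀ i : Fin (q+1), 0 ≤ (-1)^(i:ℕ) * (Lagrange.basis univ v i).eval x := by
    intro i
    set f : Fin (q+1) → ℝ := fun j => (v i - v j)⁻¹ * (x - v j) with hf
    have hbe : (Lagrange.basis univ v i).eval x = ∏ j ∈ univ.erase i, f j := by
      simp [Lagrange.basis, Polynomial.eval_prod, Lagrange.basisDivisor, hf]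
    have hsplit : ∏ j ∈ univ.erase i, f j =
        (∏ j ∈ (univ.erase i).filter (fun j => j < i), f j) *
        (∏ j ∈ (univ.erase i).filter (fun j => ¬ j < i), f j) :=
      (Finset.prod_filter_mul_prod_filter_not _ _ _).symm
    have hfilter : (univ.erase i).filter (fun j => j < i) = Finset.Iio i := by
      ext j
      simp only [Finset.mem_filter, Finset.mem_erase, Finset.mem_univ, Finset.mem_Iio,
        and_true, true_and]
      exact ⟨fun h => h.2, fun h => ⟨ne_of_lt h, h⟩⟩
    have hflip : ∏ j ∈ Finset.Iio i, f j = (-1)^(i:ℕ) * ∏ j ∈ Finset.Iio i, (-(f j)) := by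
      have : ∏ j ∈ Finset.Iio i, (-(f j)) = (-1)^(i:ℕ) * ∏ j ∈ Finset.Iio i, f j := by
        calc ∏ j ∈ Finset.Iio i, (-(f j)) = ∏ j ∈ Finset.Iio i, ((-1) * f j) := by
              simp only [neg_one_mul]
          _ = (∏ _j ∈ Finset.Iio i, (-1:ℝ)) * ∏ j ∈ Finset.Iio i, f j :=
              Finset.prod_mul_distrib
          _ = (-1)^(i:ℕ) * ∏ j ∈ Finset.Iio i, f j := by
              rw [Finset.prod_const, Fin.card_Iio]
      rw [this, ← mul_assoc, ← pow_add]
      simp [← two_mul, pow_mul]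
    have hpos1 : 0 ≤ ∏ j ∈ Finset.Iio i, (-(f j)) := by
      apply Finset.prod_nonneg
      intro j hj
      have hji : j < i := Finset.mem_Iio.mp hj
      have hvij : v i - v j < 0 := by have := hanti hji; linarith
      have := hxv j
      rw [hf]
      simp only [neg_mul_eq_neg_mul]
      have h1 : (v i - v j)⁻¹ < 0 := inv_lt_zero.mpr hvij
      nlinarith
    have hpos2 : 0 ≤ ∏ j ∈ (univ.erase i).filter (fun j => ¬ j < i), f j := by
      apply Finset.prod_nonneg
      intro j hj
      simp only [Finset.mem_filter, Finset.mem_erase, Finset.mem_univ] at hj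
      have hij : i < j := lt_of_le_of_ne (not_lt.mp hj.2) (Ne.symm hj.1.1)
      have hvij : 0 < v i - v j := by have := hanti hij; linarith
      have := hxv j
      rw [hf]
      positivity
    rw [hbe, hsplit, hfilter, hflip, ← mul_assoc, ← mul_assoc, ← pow_add]
    have : ((-1:ℝ))^((i:ℕ) + (i:ℕ)) = 1 := by simp [← two_mul, pow_mul]
    rw [this, one_mul]
    exact mul_nonneg hpos1 hpos2
  -- the main estimate
  have habs : ∀ i : Fin (q+1),
      |(Lagrange.basis univ v i).eval x| = (-1)^(i:ℕ) * (Lagrange.basis univ v i).eval x := by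
    intro i
    have h1 := abs_of_nonneg (hsign i)
    rw [abs_mul, abs_pow, abs_neg, abs_one, one_pow, one_mul] at h1
    exact h1
  have hevalh : h.eval x = ∑ i : Fin (q+1), h.eval (v i) * (Lagrange.basis univ v i).eval x := by
    conv_lhs => rw [hkey]
    simp [Lagrange.interpolate_apply, Polynomial.eval_finset_sum]
  have hevalT' : T'.eval x = ∑ i : Fin (q+1), (-1)^(i:ℕ) * (Lagrange.basis univ v i).eval x := by
    conv_lhs => rw [hT'key]
    simp [Lagrange.interpolate_apply, Polynomial.eval_finset_sum]
  calc |h.eval x| = |∑ i : Fin (q+1), h.eval (v i) * (Lagrange.basis univ v i).eval x| := by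
        rw [hevalh]
    _ ≤ ∑ i : Fin (q+1), |h.eval (v i) * (Lagrange.basis univ v i).eval x| :=
        Finset.abs_sum_le_sum_abs _ _
    _ ≤ ∑ i : Fin (q+1), B * ((-1)^(i:ℕ) * (Lagrange.basis univ v i).eval x) := by
        apply Finset.sum_le_sum
        intro i _
        rw [abs_mul, habs i]
        exact mul_le_mul_of_nonneg_right (hB _ (hvK i))
          (by rw [← habs i]; exact abs_nonneg _)
    _ = B * T'.eval x := by rw [hevalT', Finset.mul_sum]
    _ = (Polynomial.Chebyshev.T ℝ q).eval (K⁻¹ * x) * B := by rw [hT'evalgen, mul_comm]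

/-- **Polynomial extrapolation bound.**  If `h` is a real polynomial of degree at most `q`
bounded by `B` on `[-K, K]` (with `K > 0`), then for every `x` with `|x| > K`,
`|h(x)| ≤ (2|x|/K)^q * B`. -/
theorem stmt_3 (q : ℕ) (h : Polynomial ℝ) (hq : h.natDegree ≤ q)
    (K : ℝ) (hK : 0 < K)
    (B : ℝ) (hB : ∀ y : ℝ, |y| ≤ K → |h.eval y| ≤ B)
    (x : ℝ) (hx : K < |x|) :
    |h.eval x| ≤ (2 * |x| / K) ^ q * B := by
  have hB0 : 0 ≤ B := le_trans (abs_nonneg _) (hB 0 (by simp [hK.le]))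
  by_cases hq0 : q = 0
  · subst hq0
    have hc := Polynomial.eq_C_of_natDegree_le_zero hq
    rw [hc]
    have := hB 0 (by simp [hK.le])
    rw [hc] at this
    simpa using this
  have hqpos : 0 < q := Nat.pos_of_ne_zero hq0
  -- general combination step
  have combine : ∀ (g : Polynomial ℝ), g.natDegree ≤ q →
      (∀ y : ℝ, |y| ≤ K → |g.eval y| ≤ B) → ∀ z : ℝ, K < z →
      |g.eval z| ≤ (2 * z / K) ^ q * B := by
    intro g hgdeg hgB z hz
    have h1 := pos_case q hqpos g hgdeg K hK B hgB z hz
    have ht : (1:ℝ) ≤ K⁻¹ * z := by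
      rw [mul_comm, ← div_eq_mul_inv, le_div_iff₀ hK]
      linarith
    have h2 := cheb_le (K⁻¹ * z) ht q
    calc |g.eval z| ≤ (Polynomial.Chebyshev.T ℝ q).eval (K⁻¹ * z) * B := h1
      _ ≤ (2 * (K⁻¹ * z))^q * B := mul_le_mul_of_nonneg_right h2 hB0
      _ = (2 * z / K) ^ q * B := by rw [div_eq_mul_inv]; ring_nf
  rcases lt_abs.mp hx with hx1 | hx1
  · have : |x| = x := abs_of_pos (lt_trans hK hx1)
    rw [this]
    exact combine h hq hB x hx1
  · have hxneg : x < 0 := by linarith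
    have habsx : |x| = -x := abs_of_neg hxneg
    set g : Polynomial ℝ := h.comp (-Polynomial.X) with hg
    have hgdeg : g.natDegree ≤ q := by
      rw [hg, Polynomial.natDegree_comp]
      simp [Polynomial.natDegree_X, hq]
    have hgeval : ∀ y : ℝ, g.eval y = h.eval (-y) := by
      intro y; rw [hg]; simp [Polynomial.eval_comp]
    have hgB : ∀ y : ℝ, |y| ≤ K → |g.eval y| ≤ B := by
      intro y hy
      rw [hgeval]
      exact hB (-y) (by rwa [abs_neg])
    have := combine g hgdeg hgB (-x) hx1
    rw [hgeval, neg_neg] at this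
    rwa [habsx]
end

section
/- Let h be a real polynomial of degree at most q with Chebyshev expansion h(x) = Σ_{j=0}^q a_j T_j(x/K) on [−K, K], and set f(θ) = h(K cos θ). Then |a_0| ≤ sup_{|x| ≤ K} |h(x)|, and for every nonnegative integer m, Σ_{j=1}^q j^m |a_j| ≤ C · sup_{θ ∈ [0,2π]} |f^(m+1)(θ)| for a universal constant C. -/
/-!
Substituting `x = K cos θ` turns the Chebyshev expansion into the cosine polynomial
`f θ = a₀ + ∑_{j ≥ 1} a_j cos (j θ)`. Averaging over a period gives `2π a₀ = ∫ f`, whence the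
bound on `a₀`. Differentiating `m + 1` times kills `a₀` and leaves a cosine polynomial with
coefficients `j^(m+1) a_j`; by orthogonality (Parseval) their squares sum to `π⁻¹ ∫ (f^(m+1))²
≤ 2 sup |f^(m+1)|²`. Cauchy–Schwarz against `∑ j⁻² ≤ 2` then gives the claim with `C = 2`.
-/

open Real Finset

theorem integral_cos_int_mul_add_eq_zero {n : ℤ} (hn : n ≠ 0) (c : ℝ) :
    ∫ θ in (0 : ℝ)..2 * π, cos (n * θ + c) = 0 := by
  have hn' : (n : ℝ) ≠ 0 := Int.cast_ne_zero.2 hn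
  rw [intervalIntegral.integral_comp_mul_add _ hn', integral_cos, mul_zero, zero_add, add_comm,
    sin_add_int_mul_two_pi, sub_self, smul_zero]

theorem integral_cos_nat_mul_add_mul_cos_nat_mul_add {j k : ℕ} (hjk : j + k ≠ 0) (φ : ℝ) :
    ∫ θ in (0 : ℝ)..2 * π, cos (j * θ + φ) * cos (k * θ + φ) = if j = k then π else 0 := by
  have product_to_sum : ∀ θ : ℝ, cos (j * θ + φ) * cos (k * θ + φ)
      = (cos (((j - k : ℤ) : ℝ) * θ + 0) + cos (((j + k : ℕ) : ℤ) * θ + 2 * φ)) / 2 := by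
    intro θ
    have hsub := cos_sub (j * θ + φ) (k * θ + φ)
    have hadd := cos_add (j * θ + φ) (k * θ + φ)
    push_cast
    rw [show (j : ℝ) * θ + φ - (k * θ + φ) = (j - k) * θ + 0 by ring] at hsub
    rw [show (j : ℝ) * θ + φ + (k * θ + φ) = (j + k) * θ + 2 * φ by ring] at hadd
    linarith
  have hint : ∀ (n : ℤ) (c : ℝ), IntervalIntegrable (fun θ => cos (n * θ + c))
      MeasureTheory.volume 0 (2 * π) := fun n c => by
    apply Continuous.intervalIntegrable; fun_prop
  simp_rw [product_to_sum]
  rw [intervalIntegral.integral_div, intervalIntegral.integral_add (hint _ _) (hint _ _),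
    integral_cos_int_mul_add_eq_zero (n := ((j + k : ℕ) : ℤ)) (by exact_mod_cast hjk)]
  split_ifs with h
  · simp [h]
  · rw [integral_cos_int_mul_add_eq_zero (n := j - k) (sub_ne_zero.2 (by exact_mod_cast h))]
    simp

/-- A cosine polynomial with a common phase `φ`: this shape is stable under differentiation, which
multiplies `c j` by `j` and adds `π / 2` to the phase. -/
noncomputable def cosPoly (s : Finset ℕ) (c : ℕ → ℝ) (φ θ : ℝ) : ℝ :=
  ∑ j ∈ s, c j * cos (j * θ + φ)

section cosPoly

variable (s : Finset ℕ) (c : ℕ → ℝ) (φ : ℝ)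

@[fun_prop]
theorem continuous_cosPoly : Continuous (cosPoly s c φ) := by
  unfold cosPoly; fun_prop

theorem hasDerivAt_cosPoly (θ : ℝ) :
    HasDerivAt (cosPoly s c φ) (cosPoly s (fun j => c j * j) (φ + π / 2) θ) θ := by
  unfold cosPoly
  refine HasDerivAt.fun_sum fun j _ => ?_
  have hlin : HasDerivAt (fun θ : ℝ => j * θ + φ) j θ := by
    simpa using ((hasDerivAt_id θ).const_mul (j : ℝ)).add_const φ
  refine (((hasDerivAt_cos _).comp θ hlin).const_mul (c j)).congr_deriv ?_
  rw [← add_assoc, cos_add_pi_div_two]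
  ring

theorem iteratedDeriv_cosPoly (n : ℕ) :
    iteratedDeriv n (cosPoly s c φ) = cosPoly s (fun j => c j * j ^ n) (φ + n * (π / 2)) := by
  induction n with
  | zero => simp
  | succ n ih =>
    ext θ
    rw [iteratedDeriv_succ, ih, (hasDerivAt_cosPoly _ _ _ θ).deriv]
    refine sum_congr rfl fun j _ => ?_
    rw [show φ + n * (π / 2) + π / 2 = φ + ((n + 1 : ℕ) : ℝ) * (π / 2) by push_cast; ring]
    ring

variable {s}

theorem integral_cosPoly (h0 : 0 ∉ s) : ∫ θ in (0 : ℝ)..2 * π, cosPoly s c φ θ = 0 := by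
  unfold cosPoly
  rw [intervalIntegral.integral_finsetSum fun j _ => by
    apply Continuous.intervalIntegrable; fun_prop]
  refine sum_eq_zero fun j hj => ?_
  have hj : (j : ℤ) ≠ 0 := by exact_mod_cast ne_of_mem_of_not_mem hj h0
  rw [intervalIntegral.integral_const_mul, ← Int.cast_natCast,
    integral_cos_int_mul_add_eq_zero hj, mul_zero]

theorem integral_cosPoly_sq (h0 : 0 ∉ s) :
    ∫ θ in (0 : ℝ)..2 * π, cosPoly s c φ θ ^ 2 = π * ∑ j ∈ s, c j ^ 2 := by
  have hexpand : ∀ θ, cosPoly s c φ θ ^ 2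
      = ∑ j ∈ s, ∑ k ∈ s, c j * c k * (cos (j * θ + φ) * cos (k * θ + φ)) := fun θ => by
    rw [cosPoly, sq, sum_mul_sum]
    exact sum_congr rfl fun j _ => sum_congr rfl fun k _ => by ring
  simp_rw [hexpand]
  rw [intervalIntegral.integral_finsetSum fun j _ => by
    apply Continuous.intervalIntegrable; fun_prop, mul_sum]
  refine sum_congr rfl fun j hj => ?_
  rw [intervalIntegral.integral_finsetSum fun k _ => by
    apply Continuous.intervalIntegrable; fun_prop]
  have hj0 : j ≠ 0 := ne_of_mem_of_not_mem hj h0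
  rw [sum_congr rfl fun k _ => by rw [intervalIntegral.integral_const_mul,
    integral_cos_nat_mul_add_mul_cos_nat_mul_add (by omega : j + k ≠ 0)]]
  simp only [mul_ite, mul_zero, sum_ite_eq, hj, ↓reduceIte]
  ring

theorem abs_le_of_abs_add_cosPoly_le (h0 : 0 ∉ s) {a B : ℝ}
    (hB : ∀ θ ∈ Set.Icc 0 (2 * π), |a + cosPoly s c φ θ| ≤ B) : |a| ≤ B := by
  have hmean : ∫ θ in (0 : ℝ)..2 * π, (a + cosPoly s c φ θ) = 2 * π * a := by
    rw [intervalIntegral.integral_add intervalIntegrable_const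
      ((continuous_cosPoly s c φ).intervalIntegrable _ _), integral_cosPoly c φ h0]
    simp [mul_comm]
  have hle := intervalIntegral.norm_integral_le_of_norm_le_const (a := 0) (b := 2 * π)
    (f := fun θ => a + cosPoly s c φ θ)
    fun θ hθ => hB θ (Set.Ioc_subset_Icc_self (by simpa [pi_pos.le] using hθ))
  rw [hmean, Real.norm_eq_abs, abs_mul, sub_zero, abs_of_pos (by positivity), mul_comm B] at hle
  exact le_of_mul_le_mul_left hle (by positivity)

theorem sum_sq_le_of_abs_cosPoly_le (h0 : 0 ∉ s) {F : ℝ}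
    (hF : ∀ θ ∈ Set.Icc 0 (2 * π), |cosPoly s c φ θ| ≤ F) : ∑ j ∈ s, c j ^ 2 ≤ 2 * F ^ 2 := by
  have hle : ∫ θ in (0 : ℝ)..2 * π, cosPoly s c φ θ ^ 2 ≤ ∫ θ in (0 : ℝ)..2 * π, F ^ 2 :=
    intervalIntegral.integral_mono_on (by positivity)
      (((continuous_cosPoly s c φ).pow 2).intervalIntegrable _ _) intervalIntegrable_const
      fun θ hθ => sq_le_sq' (abs_le.1 (hF θ hθ)).1 (abs_le.1 (hF θ hθ)).2
  rw [integral_cosPoly_sq c φ h0, intervalIntegral.integral_const, smul_eq_mul, sub_zero] at hle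
  nlinarith [pi_pos]

end cosPoly

theorem sq_sum_pow_mul_abs_le (q m : ℕ) (a : ℕ → ℝ) :
    (∑ j ∈ Icc 1 q, (j : ℝ) ^ m * |a j|) ^ 2 ≤ 2 * ∑ j ∈ Icc 1 q, (a j * j ^ (m + 1)) ^ 2 := by
  have hbasel : ∑ j ∈ Icc 1 q, ((j : ℝ)⁻¹) ^ 2 ≤ 2 := by
    have hIoo : Ioo 0 (q + 1) = Icc 1 q := by ext; simp only [mem_Ioo, mem_Icc]; omega
    simpa [hIoo] using sum_Ioo_inv_sq_le (α := ℝ) 0 (q + 1)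
  have hterm : ∀ j ∈ Icc 1 q, (j : ℝ) ^ m * |a j| = (j : ℝ)⁻¹ * |a j * j ^ (m + 1)| := by
    intro j hj
    have hj : (0 : ℝ) < j := by exact_mod_cast (mem_Icc.1 hj).1
    rw [abs_mul, abs_of_pos (pow_pos hj _), pow_succ]
    field_simp
  calc (∑ j ∈ Icc 1 q, (j : ℝ) ^ m * |a j|) ^ 2
      = (∑ j ∈ Icc 1 q, (j : ℝ)⁻¹ * |a j * j ^ (m + 1)|) ^ 2 := by rw [sum_congr rfl hterm]
    _ ≤ (∑ j ∈ Icc 1 q, ((j : ℝ)⁻¹) ^ 2) * ∑ j ∈ Icc 1 q, |a j * j ^ (m + 1)| ^ 2 :=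
      sum_mul_sq_le_sq_mul_sq _ _ _
    _ ≤ 2 * ∑ j ∈ Icc 1 q, (a j * j ^ (m + 1)) ^ 2 := by
      simp_rw [sq_abs]
      gcongr

theorem eval_mul_cos_eq_add_cosPoly {q : ℕ} {h : Polynomial ℝ} {K : ℝ} {a : ℕ → ℝ} (hK : 0 < K)
    (hcheb : ∀ x ∈ Set.Icc (-K) K,
      h.eval x = ∑ j ∈ range (q + 1), a j * (Polynomial.Chebyshev.T ℝ (j : ℤ)).eval (x / K))
    (θ : ℝ) : h.eval (K * cos θ) = a 0 + cosPoly (Icc 1 q) a 0 θ := by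
  have hrange : range (q + 1) = insert 0 (Icc 1 q) := by
    ext; simp only [mem_range, mem_insert, mem_Icc]; omega
  have hmem : K * cos θ ∈ Set.Icc (-K) K :=
    ⟨by nlinarith [neg_one_le_cos θ], by nlinarith [cos_le_one θ]⟩
  rw [hcheb _ hmem, mul_div_cancel_left₀ _ hK.ne', hrange, sum_insert (by simp), cosPoly]
  simp [Polynomial.Chebyshev.T_real_cos]

/-- **Chebyshev coefficient bounds.**  Let `h` be a real polynomial of degree at most `q`
with Chebyshev expansion `h(x) = ∑_{j=0}^q a_j T_j(x/K)` on `[-K, K]` and set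
`f(θ) = h(K cos θ)`.  Then `|a_0| ≤ sup_{|x| ≤ K} |h(x)|`, and for every `m ≥ 0`,
`∑_{j=1}^q j^m |a_j| ≤ C · sup_{[0,2π]} |f^(m+1)|` for a universal constant `C`. -/
theorem stmt_4 :
    ∃ C : ℝ, 0 < C ∧
      ∀ (q : ℕ) (h : Polynomial ℝ) (K : ℝ) (a : ℕ → ℝ),
        h.natDegree ≤ q → 0 < K →
        (∀ x ∈ Set.Icc (-K) K,
          h.eval x = ∑ j ∈ Finset.range (q + 1),
            a j * (Polynomial.Chebyshev.T ℝ (j : ℤ)).eval (x / K)) →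
        ((∀ B : ℝ, (∀ x : ℝ, |x| ≤ K → |h.eval x| ≤ B) → |a 0| ≤ B) ∧
         ∀ (m : ℕ) (F : ℝ),
           (∀ θ ∈ Set.Icc (0 : ℝ) (2 * Real.pi),
             |iteratedDeriv (m + 1) (fun θ => h.eval (K * Real.cos θ)) θ| ≤ F) →
           ∑ j ∈ Finset.Icc 1 q, (j : ℝ) ^ m * |a j| ≤ C * F) := by
  refine ⟨2, two_pos, fun q h K a _ hK hcheb => ?_⟩
  have hf := eval_mul_cos_eq_add_cosPoly hK hcheb
  have h0 : 0 ∉ Icc 1 q := by simp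
  refine ⟨fun B hB => abs_le_of_abs_add_cosPoly_le a 0 h0 fun θ _ => ?_, fun m F hF => ?_⟩
  · rw [← hf]
    refine hB _ ?_
    rw [abs_mul, abs_of_pos hK]
    exact mul_le_of_le_one_right hK.le (abs_cos_le_one θ)
  · simp_rw [hf, iteratedDeriv_const_add m.succ_pos, iteratedDeriv_cosPoly] at hF
    have hF0 : 0 ≤ F := (abs_nonneg _).trans (hF 0 ⟨le_rfl, by positivity⟩)
    have hparseval := sum_sq_le_of_abs_cosPoly_le _ _ h0 hF
    have hcs := sq_sum_pow_mul_abs_le q m a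
    have hS : 0 ≤ ∑ j ∈ Icc 1 q, (j : ℝ) ^ m * |a j| := by positivity
    nlinarith
end

section
/- For every positive integer m and reals K, ρ, ε > 0 with ρ + ε < K, there exists a function χ : ℝ → [0,1] such that χ(x) = 0 for |x| ≤ ρ + ε/2, χ(x) = 1 for |x| ≥ ρ + ε, and the function f(θ) := χ(K cos θ) satisfies, for every k ≤ m, sup_{θ ∈ [0,2π]} |f^(k+1)(θ)| ≤ 8^(k+1) m^k (K/ε)^(k+1). -/
/-!
Write `δ = ε / 2` for the width of the transition of `χ`. A smooth step of width `δ / 7`, with no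
control on its derivatives, is averaged `m` times over windows of width `4δ / (7m)` and once more
over a window of width `2δ / 7`. An average of width `w` turns a bound `M` on the `i`-th
derivative into `2M / w` on the `(i + 1)`-st, and the last, wide window bounds `χ'` by `7 / (2δ)`
independently of `m`; this gives `|χ⁽ʲ⁾| ≤ m⁻¹ (7m / ε) ^ j` for `1 ≤ j ≤ m + 1`.

By Faà di Bruno, `(χ ∘ u)⁽ⁿ⁾ = ∑ⱼ χ⁽ʲ⁾ ∘ u · Pₙⱼ` with `|Pₙⱼ| ≤ S(n, j) K ^ j` (Stirling numbers
of the second kind) when every derivative of `u = K cos` is bounded by `K`. Since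
`S(n, j) ≤ C(n, j) (n - 1) ^ (n - j)`, the sum is at most `m⁻¹ (7mK / ε + n - 1) ^ n`, and
`n - 1 ≤ m ≤ mK / ε` bounds this by `m⁻¹ (8mK / ε) ^ n`.
-/

open Real Set Finset MeasureTheory intervalIntegral
open scoped ContDiff

theorem Nat.stirlingSecond_le_choose_mul_pow :
    ∀ n k : ℕ, Nat.stirlingSecond n k ≤ n.choose k * k ^ (n - k)
  | 0, 0 => le_rfl
  | 0, _ + 1 => Nat.zero_le _
  | _ + 1, 0 => Nat.zero_le _
  | n + 1, k + 1 => by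
    have ih₁ := Nat.stirlingSecond_le_choose_mul_pow n (k + 1)
    have ih₂ := Nat.stirlingSecond_le_choose_mul_pow n k
    have h₁ : (k + 1) * Nat.stirlingSecond n (k + 1) ≤ n.choose (k + 1) * (k + 1) ^ (n - k) := by
      rcases le_or_gt (k + 1) n with h | h
      · rw [show n - k = n - (k + 1) + 1 by omega, pow_succ]
        calc _ ≤ (k + 1) * (n.choose (k + 1) * (k + 1) ^ (n - (k + 1))) := by gcongr
          _ = _ := by ring
      · simp [Nat.stirlingSecond_eq_zero_of_lt h]
    have h₂ : Nat.stirlingSecond n k ≤ n.choose k * (k + 1) ^ (n - k) :=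
      ih₂.trans (by gcongr; omega)
    rw [Nat.stirlingSecond_succ_succ, Nat.choose_succ_succ, Nat.succ_sub_succ]
    exact (Nat.add_le_add h₁ h₂).trans_eq (by ring)

theorem sum_stirlingSecond_mul_pow_le (k : ℕ) {x : ℝ} (hx : 0 ≤ x) :
    ∑ j ∈ range (k + 2), (Nat.stirlingSecond (k + 1) j : ℝ) * x ^ j ≤ (x + k) ^ (k + 1) := by
  rw [add_pow]
  refine sum_le_sum fun j hj => ?_
  have hj : j ≤ k + 1 := Nat.lt_succ_iff.mp (mem_range.mp hj)
  have hS : Nat.stirlingSecond (k + 1) j ≤ (k + 1).choose j * k ^ (k + 1 - j) := by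
    refine (Nat.stirlingSecond_le_choose_mul_pow _ _).trans ?_
    rcases hj.lt_or_eq with h | rfl
    · gcongr; omega
    · simp
  calc (Nat.stirlingSecond (k + 1) j : ℝ) * x ^ j
      ≤ ((k + 1).choose j * k ^ (k + 1 - j) : ℕ) * x ^ j := by gcongr
    _ = x ^ j * (k : ℝ) ^ (k + 1 - j) * (k + 1).choose j := by push_cast; ring

theorem Real.iteratedDeriv_cos (n : ℕ) :
    iteratedDeriv n cos = fun x => cos (x + n * (π / 2)) := by
  induction n with
  | zero => simp
  | succ n ih =>
    funext x
    rw [iteratedDeriv_succ, ih, deriv_comp_add_const, Real.deriv_cos,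
      show x + ((n + 1 : ℕ) : ℝ) * (π / 2) = x + n * (π / 2) + π / 2 by push_cast; ring,
      cos_add_pi_div_two]

theorem abs_iteratedDeriv_const_mul_cos_le {K : ℝ} (hK : 0 ≤ K) (n : ℕ) (θ : ℝ) :
    |iteratedDeriv n (fun θ => K * cos θ) θ| ≤ K := by
  rw [iteratedDeriv_const_mul_field, Real.iteratedDeriv_cos, abs_mul, abs_of_nonneg hK]
  exact mul_le_of_le_one_right hK (abs_cos_le_one _)

noncomputable def faaDiBrunoCoeff (u : ℝ → ℝ) : ℕ → ℕ → ℝ → ℝ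
  | 0, 0 => fun _ => 1
  | 0, _ + 1 => fun _ => 0
  | n + 1, 0 => deriv (faaDiBrunoCoeff u n 0)
  | n + 1, j + 1 => fun θ =>
      deriv (faaDiBrunoCoeff u n (j + 1)) θ + faaDiBrunoCoeff u n j θ * deriv u θ

namespace faaDiBrunoCoeff

variable {u : ℝ → ℝ}

theorem eq_zero_of_lt : ∀ {n j : ℕ}, n < j → faaDiBrunoCoeff u n j = 0
  | 0, _ + 1, _ => rfl
  | n + 1, j + 1, h => by
    funext θ
    simp [faaDiBrunoCoeff, eq_zero_of_lt (Nat.lt_of_succ_lt_succ h),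
      eq_zero_of_lt (Nat.lt_of_succ_lt h)]

theorem contDiff (hu : ContDiff ℝ ∞ u) : ∀ n j, ContDiff ℝ ∞ (faaDiBrunoCoeff u n j)
  | 0, 0 => contDiff_const
  | 0, _ + 1 => contDiff_const
  | n + 1, 0 => (contDiff_infty_iff_deriv.mp (contDiff hu n 0)).2
  | n + 1, j + 1 =>
    (contDiff_infty_iff_deriv.mp (contDiff hu n (j + 1))).2.add
      ((contDiff hu n j).mul (contDiff_infty_iff_deriv.mp hu).2)

/-- The factor `j ^ i` is what makes the induction close: differentiating the `(j + 1)`-st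
coefficient costs `j + 1`, and Leibniz on the `j`-th one times `deriv u` gives
`∑ C(i, l) j ^ l = (j + 1) ^ i`; together they reproduce the Stirling recursion. -/
theorem abs_iteratedDeriv_le (hu : ContDiff ℝ ∞ u) {K : ℝ}
    (hK : ∀ i θ, |iteratedDeriv (i + 1) u θ| ≤ K) :
    ∀ n j i θ, |iteratedDeriv i (faaDiBrunoCoeff u n j) θ| ≤
      Nat.stirlingSecond n j * (j : ℝ) ^ i * K ^ j
  | 0, 0, i, θ => by
    rcases i with _ | i
    · simp [faaDiBrunoCoeff]
    · simp [faaDiBrunoCoeff, iteratedDeriv_succ']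
  | 0, _ + 1, i, θ => by simp [faaDiBrunoCoeff]
  | n + 1, 0, i, θ => by
    have := abs_iteratedDeriv_le hu hK n 0 (i + 1) θ
    simpa [faaDiBrunoCoeff, iteratedDeriv_succ'] using this
  | n + 1, j + 1, i, θ => by
    have hP := contDiff hu n j
    have hu' : ContDiff ℝ ∞ (deriv u) := (contDiff_infty_iff_deriv.mp hu).2
    have hK₀ : 0 ≤ K := (abs_nonneg _).trans (hK 0 θ)
    have hprod : |iteratedDeriv i (fun θ => faaDiBrunoCoeff u n j θ * deriv u θ) θ| ≤
        Nat.stirlingSecond n j * ((j : ℝ) + 1) ^ i * K ^ (j + 1) := by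
      rw [iteratedDeriv_fun_mul (hP.contDiffAt.of_le (by exact_mod_cast le_top))
        (hu'.contDiffAt.of_le (by exact_mod_cast le_top))]
      refine (abs_sum_le_sum_abs _ _).trans ?_
      calc ∑ l ∈ range (i + 1), |(i.choose l : ℝ) * iteratedDeriv l (faaDiBrunoCoeff u n j) θ *
              iteratedDeriv (i - l) (deriv u) θ|
          ≤ ∑ l ∈ range (i + 1), (i.choose l : ℝ) *
              (Nat.stirlingSecond n j * (j : ℝ) ^ l * K ^ j) * K := by
            refine sum_le_sum fun l _ => ?_
            rw [abs_mul, abs_mul, Nat.abs_cast, ← iteratedDeriv_succ']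
            gcongr
            · exact abs_iteratedDeriv_le hu hK n j l θ
            · exact hK _ θ
        _ = Nat.stirlingSecond n j * ((j : ℝ) + 1) ^ i * K ^ (j + 1) := by
            rw [add_pow, mul_sum, sum_mul]
            refine sum_congr rfl fun l _ => ?_
            ring
    have hderiv := abs_iteratedDeriv_le hu hK n (j + 1) (i + 1) θ
    rw [iteratedDeriv_succ'] at hderiv
    have hP' : ContDiff ℝ ∞ (deriv (faaDiBrunoCoeff u n (j + 1))) :=
      (contDiff_infty_iff_deriv.mp (contDiff hu n (j + 1))).2
    simp only [faaDiBrunoCoeff]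
    rw [iteratedDeriv_fun_add (hP'.contDiffAt.of_le (by exact_mod_cast le_top))
      ((hP.mul hu').contDiffAt.of_le (by exact_mod_cast le_top))]
    refine (abs_add_le _ _).trans ?_
    calc _ ≤ Nat.stirlingSecond n (j + 1) * ((j + 1 : ℕ) : ℝ) ^ (i + 1) * K ^ (j + 1) +
          Nat.stirlingSecond n j * ((j : ℝ) + 1) ^ i * K ^ (j + 1) := add_le_add hderiv hprod
      _ = _ := by rw [Nat.stirlingSecond_succ_succ]; push_cast; ring

end faaDiBrunoCoeff

theorem iteratedDeriv_comp_eq_sum_faaDiBrunoCoeff {χ u : ℝ → ℝ} (hχ : ContDiff ℝ ∞ χ)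
    (hu : ContDiff ℝ ∞ u) (n : ℕ) :
    iteratedDeriv n (fun θ => χ (u θ)) = fun θ =>
      ∑ j ∈ range (n + 1), iteratedDeriv j χ (u θ) * faaDiBrunoCoeff u n j θ := by
  induction n with
  | zero => funext θ; simp [faaDiBrunoCoeff]
  | succ n ih =>
    funext θ
    have hterm : ∀ j ∈ range (n + 1), HasDerivAt
        (fun θ => iteratedDeriv j χ (u θ) * faaDiBrunoCoeff u n j θ)
        (iteratedDeriv (j + 1) χ (u θ) * (faaDiBrunoCoeff u n j θ * deriv u θ) +
          iteratedDeriv j χ (u θ) * deriv (faaDiBrunoCoeff u n j) θ) θ := by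
      intro j _
      have hχj : HasDerivAt (iteratedDeriv j χ) (iteratedDeriv (j + 1) χ (u θ)) (u θ) := by
        rw [iteratedDeriv_succ]
        exact (hχ.differentiable_iteratedDeriv j
          (by exact_mod_cast ENat.natCast_lt_top j) _).hasDerivAt
      refine ((hχj.comp θ (hu.differentiable (by simp) θ).hasDerivAt).fun_mul
        ((faaDiBrunoCoeff.contDiff hu n j).differentiable (by simp) θ).hasDerivAt).congr_deriv ?_
      simp only [Function.comp_apply]
      ring
    rw [iteratedDeriv_succ, ih, (HasDerivAt.fun_sum hterm).deriv]
    rw [sum_add_distrib, sum_range_succ' _ (n + 1), sum_range_succ' (fun j => _ * deriv _ θ),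
      sum_range_succ (fun j => iteratedDeriv (j + 1) χ (u θ) * faaDiBrunoCoeff u (n + 1) (j + 1) θ)]
    simp only [faaDiBrunoCoeff, faaDiBrunoCoeff.eq_zero_of_lt (Nat.lt_succ_self n)]
    rw [sum_range_succ
      (fun j => iteratedDeriv (j + 1) χ (u θ) * (faaDiBrunoCoeff u n j θ * deriv u θ))]
    simp only [Pi.zero_def, deriv_const, zero_add, mul_add, sum_add_distrib]
    ring

theorem abs_iteratedDeriv_comp_le {χ u : ℝ → ℝ} (hχ : ContDiff ℝ ∞ χ) (hu : ContDiff ℝ ∞ u)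
    {K a b : ℝ} (hK : ∀ i θ, |iteratedDeriv (i + 1) u θ| ≤ K) (ha : 0 ≤ a) (hb : 0 ≤ b) (k : ℕ)
    (hχK : ∀ i ≤ k, ∀ x, |iteratedDeriv (i + 1) χ x| ≤ a * b ^ (i + 1)) (θ : ℝ) :
    |iteratedDeriv (k + 1) (fun θ => χ (u θ)) θ| ≤ a * (b * K + k) ^ (k + 1) := by
  have hK₀ : 0 ≤ K := (abs_nonneg _).trans (hK 0 θ)
  have hterm : ∀ j ∈ range (k + 2),
      |iteratedDeriv j χ (u θ) * faaDiBrunoCoeff u (k + 1) j θ| ≤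
        a * ((Nat.stirlingSecond (k + 1) j : ℝ) * (b * K) ^ j) := by
    intro j hj
    have hP := faaDiBrunoCoeff.abs_iteratedDeriv_le hu hK (k + 1) j 0 θ
    rw [iteratedDeriv_zero, pow_zero, mul_one] at hP
    rw [abs_mul]
    rcases j with _ | i
    · simp only [Nat.stirlingSecond_succ_zero, CharP.cast_eq_zero, zero_mul] at hP ⊢
      simp [abs_nonpos_iff.mp hP]
    · calc _ ≤ a * b ^ (i + 1) * (Nat.stirlingSecond (k + 1) (i + 1) * K ^ (i + 1)) :=
            mul_le_mul (hχK i (by simp at hj; omega) _) hP (abs_nonneg _) (by positivity)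
        _ = _ := by ring
  rw [iteratedDeriv_comp_eq_sum_faaDiBrunoCoeff hχ hu]
  calc _ ≤ ∑ j ∈ range (k + 2), a * ((Nat.stirlingSecond (k + 1) j : ℝ) * (b * K) ^ j) :=
        (abs_sum_le_sum_abs _ _).trans (sum_le_sum hterm)
    _ ≤ a * (b * K + k) ^ (k + 1) := by
        rw [← mul_sum]
        exact mul_le_mul_of_nonneg_left (sum_stirlingSecond_mul_pow_le k (by positivity)) ha

noncomputable def movingAverage (w : ℝ) (g : ℝ → ℝ) (x : ℝ) : ℝ :=
  w⁻¹ * ∫ t in x - w / 2..x + w / 2, g t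

namespace movingAverage

variable {w : ℝ} {g : ℝ → ℝ}

theorem hasDerivAt (hg : Continuous g) (x : ℝ) :
    HasDerivAt (movingAverage w g) (w⁻¹ * (g (x + w / 2) - g (x - w / 2))) x := by
  have hG : ∀ y, HasDerivAt (fun y => ∫ t in (0 : ℝ)..y, g t) (g y) y := fun y =>
    (hg.integral_hasStrictDerivAt 0 y).hasDerivAt
  have h := (((hG _).comp_add_const x (w / 2)).fun_sub
    ((hG _).comp_sub_const x (w / 2))).const_mul w⁻¹
  refine h.congr_of_eventuallyEq (Filter.Eventually.of_forall fun y => ?_)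
  simp only [movingAverage]
  rw [integral_interval_sub_left (hg.intervalIntegrable _ _) (hg.intervalIntegrable _ _)]

theorem deriv_eq (hg : Continuous g) :
    deriv (movingAverage w g) = fun x => w⁻¹ * (g (x + w / 2) - g (x - w / 2)) :=
  funext fun x => (hasDerivAt hg x).deriv

theorem contDiff (hg : ContDiff ℝ ∞ g) : ContDiff ℝ ∞ (movingAverage w g) := by
  rw [contDiff_infty_iff_deriv, deriv_eq hg.continuous]
  exact ⟨fun x => (hasDerivAt hg.continuous x).differentiableAt,
    contDiff_const.mul ((hg.comp (contDiff_id.add contDiff_const)).sub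
      (hg.comp (contDiff_id.sub contDiff_const)))⟩

theorem eq_of_forall_eq (hw : 0 < w) {x c : ℝ} (h : ∀ y ∈ Icc (x - w / 2) (x + w / 2), g y = c) :
    movingAverage w g x = c := by
  have : ∫ t in x - w / 2..x + w / 2, g t = ∫ t in x - w / 2..x + w / 2, c :=
    integral_congr fun y hy => h y (by rwa [Set.uIcc_of_le (by linarith)] at hy)
  rw [movingAverage, this, intervalIntegral.integral_const, smul_eq_mul]
  field_simp
  ring

theorem mem_Icc (hw : 0 < w) (hg : Continuous g) (hg01 : ∀ y, g y ∈ Icc (0 : ℝ) 1) (x : ℝ) :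
    movingAverage w g x ∈ Icc (0 : ℝ) 1 := by
  have hle : x - w / 2 ≤ x + w / 2 := by linarith
  have h₀ := integral_nonneg (μ := volume) hle fun y _ => (hg01 y).1
  have h₁ : ∫ t in x - w / 2..x + w / 2, g t ≤ w := by
    simpa using integral_mono_on (μ := volume) hle (hg.intervalIntegrable _ _)
      intervalIntegrable_const fun y _ => (hg01 y).2
  constructor
  · exact mul_nonneg (inv_nonneg.mpr hw.le) h₀
  · calc movingAverage w g x ≤ w⁻¹ * w := mul_le_mul_of_nonneg_left h₁ (inv_nonneg.mpr hw.le)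
      _ = 1 := inv_mul_cancel₀ hw.ne'

theorem iteratedDeriv_succ (hg : ContDiff ℝ ∞ g) (i : ℕ) (x : ℝ) :
    iteratedDeriv (i + 1) (movingAverage w g) x =
      w⁻¹ * (iteratedDeriv i g (x + w / 2) - iteratedDeriv i g (x - w / 2)) := by
  have hs : ∀ c, ContDiffAt ℝ i (fun y => g (y + c)) x := fun c =>
    ((hg.comp (contDiff_id.add contDiff_const)).of_le (by exact_mod_cast le_top)).contDiffAt
  rw [iteratedDeriv_succ', deriv_eq hg.continuous, iteratedDeriv_const_mul_field]
  simp only [sub_eq_add_neg _ (w / 2)]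
  rw [iteratedDeriv_fun_sub (hs _) (hs _), iteratedDeriv_comp_add_const,
    iteratedDeriv_comp_add_const]

theorem abs_deriv_le (hw : 0 < w) (hg : Continuous g) (hg01 : ∀ y, g y ∈ Icc (0 : ℝ) 1)
    (x : ℝ) : |deriv (movingAverage w g) x| ≤ w⁻¹ := by
  have h : |g (x + w / 2) - g (x - w / 2)| ≤ 1 := by
    obtain ⟨h₁, h₂⟩ := hg01 (x + w / 2)
    obtain ⟨h₃, h₄⟩ := hg01 (x - w / 2)
    rw [abs_le]; constructor <;> linarith
  rw [deriv_eq hg, abs_mul, abs_of_pos (inv_pos.mpr hw)]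
  simpa using mul_le_mul_of_nonneg_left h (inv_nonneg.mpr hw.le)

theorem abs_iteratedDeriv_succ_le (hw : 0 < w) (hg : ContDiff ℝ ∞ g) {i : ℕ} {M : ℝ}
    (hM : ∀ y, |iteratedDeriv i g y| ≤ M) (x : ℝ) :
    |iteratedDeriv (i + 1) (movingAverage w g) x| ≤ 2 / w * M := by
  rw [iteratedDeriv_succ hg, abs_mul, abs_of_pos (inv_pos.mpr hw)]
  calc _ ≤ w⁻¹ * (M + M) :=
        mul_le_mul_of_nonneg_left ((abs_sub _ _).trans (add_le_add (hM _) (hM _)))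
          (inv_nonneg.mpr hw.le)
    _ = 2 / w * M := by ring

end movingAverage

structure IsSmoothCutoff (s t : ℝ) (χ : ℝ → ℝ) : Prop where
  contDiff : ContDiff ℝ ∞ χ
  mem_Icc : ∀ x, χ x ∈ Icc (0 : ℝ) 1
  eq_zero : ∀ x, |x| ≤ s → χ x = 0
  eq_one : ∀ x, t ≤ |x| → χ x = 1

theorem exists_isSmoothCutoff {s t : ℝ} (hs : 0 ≤ s) (hst : s < t) :
    ∃ χ, IsSmoothCutoff s t χ := by
  have hd : 0 < t ^ 2 - s ^ 2 := by nlinarith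
  refine ⟨fun x => smoothTransition ((x ^ 2 - s ^ 2) / (t ^ 2 - s ^ 2)),
    smoothTransition.contDiff.comp (by fun_prop), fun x =>
    ⟨smoothTransition.nonneg _, smoothTransition.le_one _⟩, fun x hx => ?_, fun x hx => ?_⟩
  · have : x ^ 2 ≤ s ^ 2 := sq_le_sq' (by linarith [neg_abs_le x]) (le_abs_self x |>.trans hx)
    exact smoothTransition.zero_of_nonpos (div_nonpos_of_nonpos_of_nonneg (by linarith) hd.le)
  · have : t ^ 2 ≤ x ^ 2 := by
      rw [← sq_abs x]; exact pow_le_pow_left₀ (hs.trans hst.le) hx 2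
    exact smoothTransition.one_of_one_le ((one_le_div hd).mpr (by linarith))

namespace IsSmoothCutoff

variable {s t w : ℝ} {g : ℝ → ℝ}

theorem movingAverage (h : IsSmoothCutoff s t g) (hw : 0 < w) :
    IsSmoothCutoff (s - w / 2) (t + w / 2) (_root_.movingAverage w g) := by
  refine ⟨movingAverage.contDiff h.contDiff,
    movingAverage.mem_Icc hw h.contDiff.continuous h.mem_Icc, fun x hx => ?_, fun x hx => ?_⟩ <;>
  refine movingAverage.eq_of_forall_eq hw fun y hy => ?_
  · have : |y - x| ≤ w / 2 := abs_le.mpr ⟨by linarith [hy.1], by linarith [hy.2]⟩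
    exact h.eq_zero y (by linarith [abs_sub_abs_le_abs_sub y x])
  · have : |x - y| ≤ w / 2 := abs_le.mpr ⟨by linarith [hy.2], by linarith [hy.1]⟩
    exact h.eq_one y (by linarith [abs_sub_abs_le_abs_sub x y])

theorem iterate_movingAverage (h : IsSmoothCutoff s t g) (hw : 0 < w) (k : ℕ) :
    IsSmoothCutoff (s - k * (w / 2)) (t + k * (w / 2)) ((_root_.movingAverage w)^[k] g) := by
  induction k with
  | zero => simpa using h
  | succ k ih =>
    rw [Function.iterate_succ_apply']
    convert ih.movingAverage hw using 1 <;> push_cast <;> ring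

end IsSmoothCutoff

theorem abs_iteratedDeriv_iterate_movingAverage_le {w : ℝ} {g : ℝ → ℝ} (hw : 0 < w)
    (hg : ContDiff ℝ ∞ g) (hg01 : ∀ x, g x ∈ Icc (0 : ℝ) 1) {k i : ℕ} (hi : i < k) (x : ℝ) :
    |iteratedDeriv (i + 1) ((movingAverage w)^[k] g) x| ≤ w⁻¹ * (2 / w) ^ i := by
  have hreg : ∀ k, ContDiff ℝ ∞ ((movingAverage w)^[k] g) ∧
      ∀ x, (movingAverage w)^[k] g x ∈ Icc (0 : ℝ) 1 := fun k =>
    Function.Iterate.rec (fun f => ContDiff ℝ ∞ f ∧ ∀ x, f x ∈ Icc (0 : ℝ) 1) ⟨hg, hg01⟩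
      (fun f hf => ⟨movingAverage.contDiff hf.1, movingAverage.mem_Icc hw hf.1.continuous hf.2⟩) k
  induction k generalizing i x with
  | zero => omega
  | succ k ih =>
    rw [Function.iterate_succ_apply']
    rcases i with _ | i
    · simpa using movingAverage.abs_deriv_le hw (hreg k).1.continuous (hreg k).2 x
    · calc _ ≤ 2 / w * (w⁻¹ * (2 / w) ^ i) :=
            movingAverage.abs_iteratedDeriv_succ_le hw (hreg k).1 (fun y => ih (by omega) y) x
        _ = w⁻¹ * (2 / w) ^ (i + 1) := by ring

theorem exists_isSmoothCutoff_abs_iteratedDeriv_le (m : ℕ) (hm : 0 < m) {s δ : ℝ} (hs : 0 ≤ s)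
    (hδ : 0 < δ) : ∃ χ, IsSmoothCutoff s (s + δ) χ ∧
      ∀ i ≤ m, ∀ x, |iteratedDeriv (i + 1) χ x| ≤ (m : ℝ)⁻¹ * (7 * m / (2 * δ)) ^ (i + 1) := by
  have hm₀ : (m : ℝ) ≠ 0 := (Nat.cast_pos.mpr hm).ne'
  have hδ₀ : δ ≠ 0 := hδ.ne'
  set w : ℝ := 4 * δ / (7 * m)
  set w₁ : ℝ := 2 * δ / 7
  have hw : 0 < w := by positivity
  have hw₁ : 0 < w₁ := by positivity
  obtain ⟨ψ, hψ⟩ := exists_isSmoothCutoff (s := s + 3 * δ / 7) (t := s + 4 * δ / 7)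
    (by positivity) (by linarith)
  have hg := hψ.iterate_movingAverage hw m
  refine ⟨movingAverage w₁ ((movingAverage w)^[m] ψ), ?_, fun i hi x => ?_⟩
  · convert hg.movingAverage hw₁ using 1 <;> simp only [w, w₁] <;> field_simp <;> ring
  · rcases i with _ | i
    · calc _ ≤ w₁⁻¹ := by
            simpa using movingAverage.abs_deriv_le hw₁ hg.contDiff.continuous hg.mem_Icc x
        _ = _ := by simp only [w₁, zero_add, pow_one]; field_simp
    · calc _ ≤ 2 / w₁ * (w⁻¹ * (2 / w) ^ i) :=
            movingAverage.abs_iteratedDeriv_succ_le hw₁ hg.contDiff (fun y =>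
              abs_iteratedDeriv_iterate_movingAverage_le hw hψ.contDiff hψ.mem_Icc (by omega) y) x
        _ = _ := by
            rw [show 2 / w = 7 * m / (2 * δ) by simp only [w]; field_simp; ring, pow_succ, pow_succ]
            simp only [w, w₁]
            field_simp
            ring

/-- **Smooth test functions with near-optimal derivative bounds.**  For every `m ≥ 1` and
`K, ρ, ε > 0` with `ρ + ε < K`, there is a smooth `χ : ℝ → [0,1]` with `χ = 0` on
`{|x| ≤ ρ + ε/2}`, `χ = 1` on `{|x| ≥ ρ + ε}`, such that `f(θ) := χ(K cos θ)` satisfies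
`sup_{[0,2π]} |f^(k+1)| ≤ 8^(k+1) m^k (K/ε)^(k+1)` for every `k ≤ m`. -/
theorem stmt_6 (m : ℕ) (hm : 0 < m) (K ρ ε : ℝ) (hK : 0 < K) (hρ : 0 < ρ) (hε : 0 < ε)
    (hρε : ρ + ε < K) :
    ∃ χ : ℝ → ℝ, ContDiff ℝ (⊤ : ℕ∞) χ ∧
      (∀ x, χ x ∈ Set.Icc (0 : ℝ) 1) ∧
      (∀ x, |x| ≤ ρ + ε / 2 → χ x = 0) ∧
      (∀ x, ρ + ε ≤ |x| → χ x = 1) ∧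
      ∀ k ≤ m, ∀ θ ∈ Set.Icc (0 : ℝ) (2 * Real.pi),
        |iteratedDeriv (k + 1) (fun θ => χ (K * Real.cos θ)) θ| ≤
          8 ^ (k + 1) * (m : ℝ) ^ k * (K / ε) ^ (k + 1) := by
  obtain ⟨χ, hχ, hχ'⟩ := exists_isSmoothCutoff_abs_iteratedDeriv_le m hm
    (s := ρ + ε / 2) (δ := ε / 2) (by positivity) (by positivity)
  refine ⟨χ, hχ.contDiff, hχ.mem_Icc, hχ.eq_zero, fun x hx => hχ.eq_one x (by linarith), ?_⟩
  intro k hk θ _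
  have hkm : (k : ℝ) ≤ m * (K / ε) := by
    have : (1 : ℝ) ≤ K / ε := (one_le_div hε).mpr (by linarith)
    nlinarith [(Nat.cast_le (α := ℝ)).mpr hk]
  calc _ ≤ (m : ℝ)⁻¹ * (7 * m / (2 * (ε / 2)) * K + k) ^ (k + 1) :=
        abs_iteratedDeriv_comp_le hχ.contDiff (contDiff_const.mul contDiff_cos)
          (fun i => abs_iteratedDeriv_const_mul_cos_le hK.le (i + 1)) (by positivity)
          (by positivity) k (fun i hi => hχ' i (hi.trans hk)) θ
    _ ≤ (m : ℝ)⁻¹ * (8 * m * (K / ε)) ^ (k + 1) := by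
        gcongr
        calc 7 * m / (2 * (ε / 2)) * K + k = 7 * m * (K / ε) + k := by field_simp
          _ ≤ 8 * m * (K / ε) := by linarith
    _ = 8 ^ (k + 1) * (m : ℝ) ^ k * (K / ε) ^ (k + 1) := by
        rw [mul_pow, mul_pow, pow_succ (m : ℝ)]
        field_simp
end

section
/- Fix a positive integer q and define g_q(x) = ∏_{j=1}^q (1 − (jx)²)^⌊q/j⌋. For every positive integer b, there exists a polynomial s of degree at most 2bq such that for all k ≥ 0, (1/k!) · sup_{|x| ≤ 1/(8q)} |(1/g_q − s)^(k)(x)| ≤ 2^(−bq) (8q)^k. In particular, (1/2)(1/g_q(x)) ≤ s(x) ≤ (3/2)(1/g_q(x)) for all |x| ≤ 1/(8q). -/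
/-- The Weingarten denominator `g_q(x) = ∏_{j=1}^q (1 - (jx)²)^⌊q/j⌋`. -/
noncomputable def gq (q : ℕ) (x : ℝ) : ℝ :=
  ∏ j ∈ Finset.Icc 1 q, (1 - ((j : ℝ) * x) ^ 2) ^ (q / j)

open Complex Metric Finset Polynomial
open scoped Nat Topology

/-!
Complexify `g_q` to `G(z) = ∏ⱼ (1 - (jz)²)^⌊q/j⌋`. On `|z| ≤ 1/(2q)` each factor has modulus
at least `1/2` by Bernoulli's inequality (`⌊q/j⌋·|jz|² ≤ 1/4`), so `|1/G| ≤ 2^q` there. Cauchy's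
estimates then bound the Taylor coefficients of `1/G` at `0` by `2^q (2q)^m`, and truncating
the Taylor series after degree `2bq` leaves an error `E` with `|E| ≤ 2^q·2^(-2bq) ≤ 2^(-bq)` on
`|z| ≤ 1/(4q)`; `s` is the truncation with the real parts of its coefficients. For real
`|x| ≤ 1/(8q)` the disc of radius `1/(8q)` about `x` stays inside `|z| ≤ 1/(4q)`, and Cauchy's
estimates for `E` on that disc bound the derivatives of its real part `1/g_q - s`. The sandwich
is the case `k = 0` together with `1/g_q ≥ 1`.
-/

theorem iteratedDeriv_eq_re_iteratedDeriv {U : Set ℂ} (hU : IsOpen U) {E : ℂ → ℂ}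
    (hE : DifferentiableOn ℂ E U) {f : ℝ → ℝ} (hf : ∀ y : ℝ, (y : ℂ) ∈ U → f y = (E y).re)
    (k : ℕ) {x : ℝ} (hx : (x : ℂ) ∈ U) :
    iteratedDeriv k f x = (iteratedDeriv k E x).re := by
  induction k generalizing x with
  | zero => simpa using hf x hx
  | succ k ih =>
    have hopen : IsOpen {y : ℝ | (y : ℂ) ∈ U} := hU.preimage continuous_ofReal
    have hev : iteratedDeriv k f =ᶠ[𝓝 x] fun y : ℝ => (iteratedDeriv k E y).re :=
      Filter.eventually_of_mem (hopen.mem_nhds hx) fun y hy => ih hy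
    have hd : HasDerivAt (iteratedDeriv k E) (iteratedDeriv (k + 1) E x) x := by
      rw [iteratedDeriv_succ, iteratedDeriv_eq_iterate]
      exact (((hE.analyticOnNhd hU).iterated_deriv k) x hx).differentiableAt.hasDerivAt
    rw [iteratedDeriv_succ, hev.deriv_eq, hd.real_of_complex.deriv]

theorem abs_iteratedDeriv_le_of_re_eq {U : Set ℂ} (hU : IsOpen U) {E : ℂ → ℂ}
    (hE : DifferentiableOn ℂ E U) {f : ℝ → ℝ} (hf : ∀ y : ℝ, (y : ℂ) ∈ U → f y = (E y).re)
    {x r δ : ℝ} (hr : 0 < r) (hxU : closedBall (x : ℂ) r ⊆ U)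
    (hδ : ∀ z ∈ sphere (x : ℂ) r, ‖E z‖ ≤ δ) (k : ℕ) :
    |iteratedDeriv k f x| ≤ k ! * δ / r ^ k := by
  rw [iteratedDeriv_eq_re_iteratedDeriv hU hE hf k (hxU (mem_closedBall_self hr.le))]
  exact (abs_re_le_norm _).trans <|
    norm_iteratedDeriv_le_of_forall_mem_sphere_norm_le k hr (hE.diffContOnCl_ball hxU) hδ

theorem norm_sub_taylorSum_le {f : ℂ → ℂ} {c : ℂ} {R M ρ : ℝ} (hR : 0 < R)
    (hf : DiffContOnCl ℂ f (ball c R)) (hM : ∀ z ∈ sphere c R, ‖f z‖ ≤ M)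
    (hρ0 : 0 ≤ ρ) (hρ1 : ρ < 1) {z : ℂ} (hz : ‖z - c‖ ≤ ρ * R) (N : ℕ) :
    ‖f z - ∑ m ∈ range N, (m ! : ℂ)⁻¹ * iteratedDeriv m f c * (z - c) ^ m‖ ≤
      M * ρ ^ N / (1 - ρ) := by
  set a : ℕ → ℂ := fun m => (m ! : ℂ)⁻¹ * iteratedDeriv m f c * (z - c) ^ m
  have hzR : z ∈ ball c R := mem_ball_iff_norm.2 (hz.trans_lt (by nlinarith))
  have hsum : HasSum a (f z) := by
    have h := hasSum_taylorSeries_on_ball hf.differentiableOn hzR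
    rwa [show (fun m : ℕ => (m ! : ℂ)⁻¹ • (z - c) ^ m • iteratedDeriv m f c) = a from
      funext fun m => by simp only [a, smul_eq_mul]; ring] at h
  have hterm : ∀ m, ‖a m‖ ≤ M * ρ ^ m := by
    intro m
    have hC := norm_iteratedDeriv_le_of_forall_mem_sphere_norm_le m hR hf hM
    calc ‖a m‖ = ‖iteratedDeriv m f c‖ * ((m ! : ℝ)⁻¹ * ‖z - c‖ ^ m) := by
          simp only [a, norm_mul, norm_inv, norm_pow, Complex.norm_natCast]
          ring
      _ ≤ (m ! * M / R ^ m) * ((m ! : ℝ)⁻¹ * (ρ * R) ^ m) := by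
          gcongr
          exact (norm_nonneg _).trans hC
      _ = M * ρ ^ m := by
          field_simp
          ring
  have hgeom : HasSum (fun i => M * ρ ^ N * ρ ^ i) (M * ρ ^ N * (1 - ρ)⁻¹) :=
    (hasSum_geometric_of_lt_one hρ0 hρ1).mul_left _
  refine ((hasSum_nat_add_iff' N).2 hsum).norm_le_of_bounded hgeom fun i => ?_
  simpa only [pow_add, mul_comm, mul_left_comm, mul_assoc] using hterm (i + N)

noncomputable def reTaylorPoly (f : ℂ → ℂ) (n : ℕ) : ℝ[X] :=
  ∑ m ∈ range (n + 1), C ((m ! : ℂ)⁻¹ * iteratedDeriv m f 0).re * X ^ m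

theorem natDegree_reTaylorPoly_le (f : ℂ → ℂ) (n : ℕ) : (reTaylorPoly f n).natDegree ≤ n := by
  refine natDegree_sum_le_of_forall_le _ _ fun m hm => ?_
  exact (natDegree_C_mul_X_pow_le _ m).trans (Nat.lt_succ_iff.1 (mem_range.1 hm))

theorem eval_reTaylorPoly (f : ℂ → ℂ) (n : ℕ) (y : ℝ) :
    (reTaylorPoly f n).eval y =
      (∑ m ∈ range (n + 1), (m ! : ℂ)⁻¹ * iteratedDeriv m f 0 * (y : ℂ) ^ m).re := by
  simp [reTaylorPoly, eval_finsetSum, re_sum, ← ofReal_pow]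

noncomputable def gqComplex (q : ℕ) (z : ℂ) : ℂ :=
  ∏ j ∈ Icc 1 q, (1 - ((j : ℂ) * z) ^ 2) ^ (q / j)

theorem gqComplex_ofReal (q : ℕ) (x : ℝ) : gqComplex q x = gq q x := by
  simp [gqComplex, gq]

theorem inv_two_le_norm_gqComplex_factor {q j : ℕ} (hj : j ∈ Icc 1 q) {z : ℂ}
    (hz : ‖z‖ ≤ (2 * (q : ℝ))⁻¹) :
    2⁻¹ ≤ ‖(1 - ((j : ℂ) * z) ^ 2) ^ (q / j)‖ := by
  obtain ⟨hj1, hjq⟩ := mem_Icc.1 hj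
  have hq : (0 : ℝ) < q := by exact_mod_cast hj1.trans hjq
  have hjq' : (j : ℝ) ≤ q := by exact_mod_cast hjq
  have hqz : q * ‖z‖ ≤ 2⁻¹ := by
    rw [mul_inv, ← div_eq_mul_inv, le_div_iff₀ hq] at hz
    linarith
  set t := ‖((j : ℂ) * z) ^ 2‖
  have ht : t = (j * ‖z‖) ^ 2 := by simp [t, norm_pow]
  have hmt : ((q / j : ℕ) : ℝ) * t ≤ 4⁻¹ := by
    have hdiv : ((q / j : ℕ) : ℝ) * j ≤ q := by exact_mod_cast Nat.div_mul_le_self q j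
    calc ((q / j : ℕ) : ℝ) * t = ((q / j : ℕ) : ℝ) * j * (j * ‖z‖ ^ 2) := by rw [ht]; ring
      _ ≤ q * (q * ‖z‖ ^ 2) := by gcongr
      _ = (q * ‖z‖) ^ 2 := by ring
      _ ≤ 4⁻¹ := by nlinarith [mul_nonneg hq.le (norm_nonneg z)]
  have ht1 : t ≤ 1 := by
    have hjz : j * ‖z‖ ≤ 2⁻¹ := (mul_le_mul_of_nonneg_right hjq' (norm_nonneg z)).trans hqz
    rw [ht]
    nlinarith [mul_nonneg (Nat.cast_nonneg j : (0 : ℝ) ≤ j) (norm_nonneg z)]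
  calc (2⁻¹ : ℝ) ≤ 1 + (q / j : ℕ) * -t := by linarith
    _ ≤ (1 - t) ^ (q / j) := by
        rw [sub_eq_add_neg]
        exact one_add_mul_le_pow (by linarith) _
    _ ≤ ‖1 - ((j : ℂ) * z) ^ 2‖ ^ (q / j) := by
        gcongr
        simpa only [t, norm_one] using norm_sub_norm_le (1 : ℂ) (((j : ℂ) * z) ^ 2)
    _ = _ := (norm_pow _ _).symm

theorem inv_two_pow_le_norm_gqComplex {q : ℕ} {z : ℂ} (hz : ‖z‖ ≤ (2 * (q : ℝ))⁻¹) :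
    (2 ^ q)⁻¹ ≤ ‖gqComplex q z‖ := by
  calc ((2 : ℝ) ^ q)⁻¹ = ∏ _j ∈ Icc 1 q, (2⁻¹ : ℝ) := by simp
    _ ≤ ∏ j ∈ Icc 1 q, ‖(1 - ((j : ℂ) * z) ^ 2) ^ (q / j)‖ :=
        prod_le_prod (fun _ _ => by norm_num) fun j hj => inv_two_le_norm_gqComplex_factor hj hz
    _ = ‖gqComplex q z‖ := (norm_prod _ _).symm

theorem differentiableOn_inv_gqComplex (q : ℕ) :
    DifferentiableOn ℂ (fun z => (gqComplex q z)⁻¹) (closedBall 0 (2 * (q : ℝ))⁻¹) := by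
  refine DifferentiableOn.inv (by unfold gqComplex; fun_prop) fun z hz => ?_
  refine norm_pos_iff.1 (lt_of_lt_of_le (by positivity) (inv_two_pow_le_norm_gqComplex ?_))
  exact mem_closedBall_zero_iff.1 hz

theorem norm_inv_gqComplex_le {q : ℕ} {z : ℂ} (hz : ‖z‖ ≤ (2 * (q : ℝ))⁻¹) :
    ‖(gqComplex q z)⁻¹‖ ≤ 2 ^ q := by
  rw [norm_inv]
  exact inv_le_of_inv_le₀ (by positivity) (inv_two_pow_le_norm_gqComplex hz)

theorem one_le_one_div_gq {q : ℕ} {x : ℝ} (hx : q * |x| < 1) : 1 ≤ 1 / gq q x := by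
  have hfac : ∀ j ∈ Icc 1 q, 0 < 1 - ((j : ℝ) * x) ^ 2 ∧ 1 - ((j : ℝ) * x) ^ 2 ≤ 1 := by
    intro j hj
    have hjq : (j : ℝ) ≤ q := by exact_mod_cast (mem_Icc.1 hj).2
    have hjx : |(j : ℝ) * x| < 1 := by
      rw [abs_mul, Nat.abs_cast]
      exact (mul_le_mul_of_nonneg_right hjq (abs_nonneg x)).trans_lt hx
    constructor
    · nlinarith [abs_nonneg ((j : ℝ) * x), sq_abs ((j : ℝ) * x)]
    · nlinarith [sq_nonneg ((j : ℝ) * x)]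
  refine one_le_one_div (prod_pos fun j hj => pow_pos (hfac j hj).1 _) ?_
  exact prod_le_one (fun j hj => pow_nonneg (hfac j hj).1.le _)
    fun j hj => pow_le_one₀ (hfac j hj).1.le (hfac j hj).2

theorem norm_inv_gqComplex_sub_taylorSum_le {q b : ℕ} (hq : 0 < q) (hb : 0 < b) {z : ℂ}
    (hz : ‖z‖ ≤ 2⁻¹ * (2 * (q : ℝ))⁻¹) :
    ‖(gqComplex q z)⁻¹ - ∑ m ∈ range (2 * b * q + 1),
        (m ! : ℂ)⁻¹ * iteratedDeriv m (fun w => (gqComplex q w)⁻¹) 0 * z ^ m‖ ≤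
      2⁻¹ ^ (b * q) := by
  have h := norm_sub_taylorSum_le (by positivity)
    ((differentiableOn_inv_gqComplex q).diffContOnCl_ball le_rfl)
    (fun w hw => norm_inv_gqComplex_le (mem_sphere_zero_iff_norm.1 hw).le)
    (ρ := 2⁻¹) (by norm_num) (by norm_num) (by simpa using hz) (2 * b * q + 1)
  simp only [sub_zero] at h
  refine h.trans ?_
  calc (2 : ℝ) ^ q * 2⁻¹ ^ (2 * b * q + 1) / (1 - 2⁻¹)
      = 2 ^ q * 2⁻¹ ^ (b * q) * 2⁻¹ ^ (b * q) := by
        rw [show 2 * b * q + 1 = b * q + b * q + 1 by ring, pow_succ, pow_add]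
        ring
    _ ≤ 2 ^ (b * q) * 2⁻¹ ^ (b * q) * 2⁻¹ ^ (b * q) := by
        gcongr
        · norm_num
        · exact Nat.le_mul_of_pos_left q hb
    _ = 2⁻¹ ^ (b * q) := by rw [← mul_pow]; norm_num

theorem abs_iteratedDeriv_inv_gq_sub_reTaylorPoly_le {q b : ℕ} (hq : 0 < q) (hb : 0 < b)
    (k : ℕ) {x : ℝ} (hx : |x| ≤ 1 / (8 * q)) :
    |iteratedDeriv k (fun y => 1 / gq q y -
        (reTaylorPoly (fun z => (gqComplex q z)⁻¹) (2 * b * q)).eval y) x| ≤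
      k ! * 2⁻¹ ^ (b * q) * (8 * (q : ℝ)) ^ k := by
  set R : ℝ := (2 * (q : ℝ))⁻¹
  have hR : 0 < R := by positivity
  have h8q : 1 / (8 * q : ℝ) = R / 4 := by simp only [R]; field_simp; ring
  set F : ℂ → ℂ := fun z => (gqComplex q z)⁻¹
  set E : ℂ → ℂ := fun z =>
    F z - ∑ m ∈ range (2 * b * q + 1), (m ! : ℂ)⁻¹ * iteratedDeriv m F 0 * z ^ m
  have hE : DifferentiableOn ℂ E (ball 0 R) :=
    ((differentiableOn_inv_gqComplex q).mono ball_subset_closedBall).sub (by fun_prop)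
  have hre : ∀ y : ℝ, 1 / gq q y - (reTaylorPoly F (2 * b * q)).eval y = (E y).re := by
    intro y
    simp [E, F, eval_reTaylorPoly, gqComplex_ofReal]
  rw [h8q] at hx
  have hball : closedBall (x : ℂ) (R / 4) ⊆ closedBall 0 (2⁻¹ * R) :=
    closedBall_subset_closedBall' (by rw [dist_zero_right, norm_real, Real.norm_eq_abs]; linarith)
  refine (abs_iteratedDeriv_le_of_re_eq isOpen_ball hE (fun y _ => hre y) (by positivity)
    (hball.trans (closedBall_subset_ball (by linarith))) (fun z hz =>
      norm_inv_gqComplex_sub_taylorSum_le hq hb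
        (mem_closedBall_zero_iff.1 (hball (sphere_subset_closedBall hz)))) k).trans_eq ?_
  rw [← h8q, one_div_pow, div_div_eq_mul_div, div_one]

/-- **Polynomial approximation of `1/g_q`.**  For every `b ≥ 1` there is a polynomial `s`
of degree at most `2bq` such that `(1/k!)·sup_{|x| ≤ 1/(8q)} |(1/g_q - s)^(k)| ≤
2^(-bq)(8q)^k` for all `k ≥ 0`; in particular `(1/2)(1/g_q) ≤ s ≤ (3/2)(1/g_q)` on
`[-1/(8q), 1/(8q)]`. -/
theorem stmt_8 (q : ℕ) (hq : 0 < q) (b : ℕ) (hb : 0 < b) :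
    ∃ s : Polynomial ℝ, s.natDegree ≤ 2 * b * q ∧
      (∀ k : ℕ, ∀ x : ℝ, |x| ≤ 1 / (8 * q) →
        |iteratedDeriv k (fun y => 1 / gq q y - s.eval y) x| ≤
          (k.factorial : ℝ) * ((2 : ℝ)⁻¹) ^ (b * q) * (8 * (q : ℝ)) ^ k) ∧
      (∀ x : ℝ, |x| ≤ 1 / (8 * q) →
        (1 / 2) * (1 / gq q x) ≤ s.eval x ∧ s.eval x ≤ (3 / 2) * (1 / gq q x)) := by
  set s := reTaylorPoly (fun z => (gqComplex q z)⁻¹) (2 * b * q)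
  refine ⟨s, natDegree_reTaylorPoly_le _ _,
    fun k x hx => abs_iteratedDeriv_inv_gq_sub_reTaylorPoly_le hq hb k hx, fun x hx => ?_⟩
  have h0 := abs_le.1 (by
    simpa only [iteratedDeriv_zero, Nat.factorial_zero, Nat.cast_one, one_mul, pow_zero,
      mul_one] using abs_iteratedDeriv_inv_gq_sub_reTaylorPoly_le hq hb 0 hx)
  have hg : 1 ≤ 1 / gq q x := by
    refine one_le_one_div_gq ?_
    rw [le_div_iff₀ (by positivity)] at hx
    linarith
  have h2 : (2 : ℝ)⁻¹ ^ (b * q) ≤ 2⁻¹ :=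
    pow_le_of_le_one (by norm_num) (by norm_num) (by positivity)
  constructor <;> linarith
end

section
/- Fix the disc of radius 1/(2q) in ℂ and g_q(z) = ∏_{j=1}^q (1 − (jz)²)^⌊q/j⌋. Then |1/g_q(z)| ≤ e^{q/2} for all complex z with |z| ≤ 1/(2q). -/
/-!
Each factor `1 - (jz)²` of `g_q` has `‖jz‖ ≤ 1/2` on the disc, so `‖1 - (jz)²‖ ≥ 1 - ‖jz‖² ≥
e^{-2‖jz‖²}`. Hence `‖g_q(z)‖ ≥ exp(-2‖z‖² ∑ ⌊q/j⌋ j²)`, and `⌊q/j⌋ j² ≤ q j ≤ q²`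
bounds the sum by `q³`, so the exponent is at least `-2 q³ / (2q)² = -q/2`.
-/

open Finset

/-- From `e^{2t} ≥ 1 + 2t ≥ 1 / (1 - t)`, the last step being `t (1 - 2t) ≥ 0`. -/
lemma Real.exp_neg_two_mul_le_one_sub {t : ℝ} (ht₀ : 0 ≤ t) (ht : t ≤ 1 / 2) :
    Real.exp (-(2 * t)) ≤ 1 - t := by
  have h₁ : 1 + 2 * t ≤ Real.exp (2 * t) := by linarith [Real.add_one_le_exp (2 * t)]
  rw [Real.exp_neg, inv_le_iff_one_le_mul₀' (Real.exp_pos _)]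
  nlinarith

lemma exp_neg_two_mul_sq_norm_le_norm_one_sub_sq {R : Type*} [SeminormedRing R] [NormOneClass R]
    {w : R} (hw : ‖w‖ ≤ 1 / 2) : Real.exp (-(2 * ‖w‖ ^ 2)) ≤ ‖1 - w ^ 2‖ :=
  calc Real.exp (-(2 * ‖w‖ ^ 2)) ≤ 1 - ‖w‖ ^ 2 :=
        Real.exp_neg_two_mul_le_one_sub (by positivity) (by nlinarith [norm_nonneg w])
    _ ≤ ‖(1 : R)‖ - ‖w ^ 2‖ := by rw [norm_one]; linarith [norm_pow_le w 2]
    _ ≤ ‖1 - w ^ 2‖ := norm_sub_norm_le _ _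

lemma exp_neg_two_mul_sum_le_norm_prod_one_sub_sq_pow {ι R : Type*} [SeminormedCommRing R]
    [NormMulClass R] [NormOneClass R] (s : Finset ι) (w : ι → R) (n : ι → ℕ)
    (hw : ∀ i ∈ s, ‖w i‖ ≤ 1 / 2) :
    Real.exp (-(2 * ∑ i ∈ s, n i * ‖w i‖ ^ 2)) ≤ ‖∏ i ∈ s, (1 - w i ^ 2) ^ n i‖ := by
  rw [norm_prod, mul_sum, ← sum_neg_distrib, Real.exp_sum]
  refine prod_le_prod (fun _ _ => (Real.exp_pos _).le) fun i hi => ?_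
  calc Real.exp (-(2 * (n i * ‖w i‖ ^ 2))) = Real.exp (-(2 * ‖w i‖ ^ 2)) ^ n i := by
        rw [← Real.exp_nat_mul]; congr 1; ring
    _ ≤ ‖1 - w i ^ 2‖ ^ n i := by
        gcongr; exact exp_neg_two_mul_sq_norm_le_norm_one_sub_sq (hw i hi)
    _ = ‖(1 - w i ^ 2) ^ n i‖ := (norm_pow _ _).symm

lemma Nat.sum_Icc_div_mul_sq_le_cube (q : ℕ) : ∑ j ∈ Icc 1 q, q / j * j ^ 2 ≤ q ^ 3 :=
  calc ∑ j ∈ Icc 1 q, q / j * j ^ 2 ≤ ∑ _j ∈ Icc 1 q, q * q := by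
        refine sum_le_sum fun j hj => ?_
        calc q / j * j ^ 2 = q / j * j * j := by ring
          _ ≤ q * q := Nat.mul_le_mul (Nat.div_mul_le_self q j) (mem_Icc.mp hj).2
    _ = q ^ 3 := by rw [sum_const, Nat.card_Icc, Nat.add_sub_cancel, smul_eq_mul]; ring

theorem stmt_9_general (q : ℕ) (z : ℂ) (hz : ‖z‖ ≤ 1 / (2 * q)) :
    ‖(∏ j ∈ Finset.Icc 1 q, (1 - ((j : ℂ) * z) ^ 2) ^ (q / j))⁻¹‖ ≤
      Real.exp ((q : ℝ) / 2) := by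
  have hzq : ‖z‖ * q ≤ 1 / 2 := by
    rcases q.eq_zero_or_pos with rfl | hq
    · simp
    · calc ‖z‖ * q ≤ 1 / (2 * q) * q := by gcongr
        _ = 1 / 2 := by field_simp
  have hw : ∀ j ∈ Icc 1 q, ‖(j : ℂ) * z‖ ≤ 1 / 2 := fun j hj => by
    rw [norm_mul, Complex.norm_natCast]
    nlinarith [norm_nonneg z, (Nat.cast_le (α := ℝ)).mpr (mem_Icc.mp hj).2]
  have hsum : ∑ j ∈ Icc 1 q, ((q / j : ℕ) : ℝ) * ‖(j : ℂ) * z‖ ^ 2 ≤ q / 4 :=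
    calc ∑ j ∈ Icc 1 q, ((q / j : ℕ) : ℝ) * ‖(j : ℂ) * z‖ ^ 2
        = ((∑ j ∈ Icc 1 q, q / j * j ^ 2 : ℕ) : ℝ) * ‖z‖ ^ 2 := by
          push_cast
          rw [sum_mul]
          exact sum_congr rfl fun j _ => by rw [norm_mul, Complex.norm_natCast]; ring
      _ ≤ (q : ℝ) ^ 3 * ‖z‖ ^ 2 := by
          gcongr; exact_mod_cast Nat.sum_Icc_div_mul_sq_le_cube q
      _ = (‖z‖ * q) ^ 2 * q := by ring
      _ ≤ (1 / 2) ^ 2 * q := by gcongr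
      _ = q / 4 := by ring
  rw [norm_inv]
  refine inv_le_of_inv_le₀ (Real.exp_pos _) ?_
  calc (Real.exp (q / 2))⁻¹
      ≤ Real.exp (-(2 * ∑ j ∈ Icc 1 q, ((q / j : ℕ) : ℝ) * ‖(j : ℂ) * z‖ ^ 2)) := by
        rw [← Real.exp_neg]; gcongr; linarith
    _ ≤ _ := exp_neg_two_mul_sum_le_norm_prod_one_sub_sq_pow _ _ _ hw

/-- **Bound on `1/g_q` in the complex disc of radius `1/(2q)`.**  With
`g_q(z) = ∏_{j=1}^q (1 - (jz)²)^⌊q/j⌋`, we have `|1/g_q(z)| ≤ e^{q/2}` for all complex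
`z` with `|z| ≤ 1/(2q)`. -/
theorem stmt_9 (q : ℕ) (hq : 0 < q) (z : ℂ) (hz : ‖z‖ ≤ 1 / (2 * q)) :
    ‖(∏ j ∈ Finset.Icc 1 q, (1 - ((j : ℂ) * z) ^ 2) ^ (q / j))⁻¹‖ ≤
      Real.exp ((q : ℝ) / 2) :=
  stmt_9_general q z hz
end

section
/- Let λ be a partition of L and let ω_k(λ) be the number of boxes (i,j) in the Young diagram of λ with 2j − i − 1 = k. Then ω_0(λ) ≤ L, and ω_k(λ) ≤ ⌊2L/|k|⌋ for every nonzero integer k; more precisely ω_k(λ) ≤ ⌊2L/(k+2)⌋ for k > 0 and ω_k(λ) ≤ ⌊L/(|k|+1)⌋ for k ≤ 0. -/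
lemma rect_le (μ : YoungDiagram) {a b : ℕ} (h : (a, b) ∈ μ) :
    (a + 1) * (b + 1) ≤ μ.cells.card := by
  have hsub : Finset.range (a+1) ×ˢ Finset.range (b+1) ⊆ μ.cells := by
    rintro ⟨x, y⟩ hxy
    simp only [Finset.mem_product, Finset.mem_range, Nat.lt_succ_iff] at hxy
    exact (YoungDiagram.mem_cells _).mpr (μ.up_left_mem hxy.1 hxy.2 h)
  calc (a+1)*(b+1) = (Finset.range (a+1) ×ˢ Finset.range (b+1)).card := by
        simp [Finset.card_product]
    _ ≤ μ.cells.card := Finset.card_le_card hsub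

lemma key (μ : YoungDiagram) (k : ℤ) (β : ℕ)
    (hβ : ∀ b : ℕ, k ≤ 2 * (b : ℤ) → β ≤ b)
    (hω : (μ.cells.filter (fun c => 2 * (c.2 : ℤ) - (c.1 : ℤ) = k)).Nonempty) :
    ∃ a b : ℕ, (a, b) ∈ μ ∧ 2 * (b : ℤ) - (a : ℤ) = k ∧
      β + (μ.cells.filter (fun c => 2 * (c.2 : ℤ) - (c.1 : ℤ) = k)).card ≤ b + 1 := by
  set S := μ.cells.filter (fun c => 2 * (c.2 : ℤ) - (c.1 : ℤ) = k) with hS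
  have hinj : Set.InjOn Prod.snd (S : Set (ℕ × ℕ)) := by
    rintro ⟨a1, b1⟩ h1 ⟨a2, b2⟩ h2 h
    simp only [hS, Finset.coe_filter, Set.mem_setOf_eq] at h1 h2
    simp only at h
    subst h
    have : a1 = a2 := by omega
    simp [this]
  set T := S.image Prod.snd with hT
  have hTcard : T.card = S.card := Finset.card_image_of_injOn hinj
  have hTne : T.Nonempty := hω.image _
  set M := T.max' hTne with hM
  obtain ⟨c, hcS, hc2⟩ := Finset.mem_image.mp (T.max'_mem hTne)
  have hmemS : ∀ x ∈ S, x ∈ μ.cells ∧ 2 * (x.2 : ℤ) - (x.1 : ℤ) = k := by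
    intro x hx
    exact Finset.mem_filter.mp hx
  have hsubIcc : T ⊆ Finset.Icc β M := by
    intro b hb
    obtain ⟨x, hxS, hx2⟩ := Finset.mem_image.mp hb
    have := (hmemS x hxS).2
    have hβb : β ≤ b := hβ b (by omega)
    exact Finset.mem_Icc.mpr ⟨hβb, T.le_max' b hb⟩
  have hβM : β ≤ M := (Finset.mem_Icc.mp (hsubIcc (T.max'_mem hTne))).1
  have hcardIcc : T.card ≤ M + 1 - β := by
    have := Finset.card_le_card hsubIcc
    simpa [Nat.card_Icc] using this
  have hc := hmemS c hcS
  have hc2' : c.2 = M := hc2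
  refine ⟨c.1, M, ?_, ?_, ?_⟩
  · rw [← hc2']
    have := hc.1
    have h' : (c.1, c.2) ∈ μ.cells := by simpa using this
    exact (YoungDiagram.mem_cells _).mp h'
  · rw [← hc2']; exact hc.2
  · omega

/-- **Multiplicity bounds on the diagonals `2j - i - 1 = k` of a Young diagram.**
If `μ` is a Young diagram with `L` boxes and `ω_k(μ)` denotes the number of boxes `(i,j)`
(in 1-indexed coordinates; i.e. cells `(i,j)` of `μ` in Mathlib's 0-indexed coordinates
with `2j - i = k`) with `2j - i - 1 = k`, then `ω_0(μ) ≤ L`, and `ω_k(μ) ≤ ⌊2L/|k|⌋` for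
every nonzero `k`; more precisely `ω_k(μ) ≤ ⌊2L/(k+2)⌋` for `k > 0` and
`ω_k(μ) ≤ ⌊L/(|k|+1)⌋` for `k ≤ 0`. -/
theorem stmt_12 (L : ℕ) (μ : YoungDiagram) (hμ : μ.cells.card = L) :
    ((μ.cells.filter (fun c => 2 * (c.2 : ℤ) - (c.1 : ℤ) = 0)).card ≤ L) ∧
    (∀ k : ℤ, k ≠ 0 →
      (μ.cells.filter (fun c => 2 * (c.2 : ℤ) - (c.1 : ℤ) = k)).card ≤ 2 * L / k.natAbs) ∧
    (∀ k : ℤ, 0 < k →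
      (μ.cells.filter (fun c => 2 * (c.2 : ℤ) - (c.1 : ℤ) = k)).card ≤
        2 * L / (k.natAbs + 2)) ∧
    (∀ k : ℤ, k ≤ 0 →
      (μ.cells.filter (fun c => 2 * (c.2 : ℤ) - (c.1 : ℤ) = k)).card ≤
        L / (k.natAbs + 1)) := by
  have hpos : ∀ k : ℤ, 0 < k →
      (μ.cells.filter (fun c => 2 * (c.2 : ℤ) - (c.1 : ℤ) = k)).card ≤
        2 * L / (k.natAbs + 2) := by
    intro k hk
    set ω := (μ.cells.filter (fun c => 2 * (c.2 : ℤ) - (c.1 : ℤ) = k)).card with hωdef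
    rcases Nat.eq_zero_or_pos ω with h0 | hω1
    · simp [h0]
    set n := k.natAbs with hn
    have hkn : (n : ℤ) = k := by omega
    obtain ⟨a, b, hmem, hdiag, hcard⟩ := key μ k ((n+1)/2)
      (fun b hb => by omega) (Finset.card_pos.mp hω1)
    have hr : (a+1) * (b+1) ≤ L := hμ ▸ rect_le μ hmem
    rw [Nat.le_div_iff_mul_le (by positivity)]
    have ha : a + n = 2 * b := by omega
    have h2b : n + 2 * ω ≤ 2 * (b + 1) := by omega
    have ha' : 2 * ω ≤ a + 2 := by omega
    nlinarith [hr, ha', h2b, hω1, Nat.mul_le_mul ha' h2b]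
  have hneg : ∀ k : ℤ, k ≤ 0 →
      (μ.cells.filter (fun c => 2 * (c.2 : ℤ) - (c.1 : ℤ) = k)).card ≤
        L / (k.natAbs + 1) := by
    intro k hk
    set ω := (μ.cells.filter (fun c => 2 * (c.2 : ℤ) - (c.1 : ℤ) = k)).card with hωdef
    rcases Nat.eq_zero_or_pos ω with h0 | hω1
    · simp [h0]
    set n := k.natAbs with hn
    have hkn : (n : ℤ) = -k := by omega
    obtain ⟨a, b, hmem, hdiag, hcard⟩ := key μ k 0
      (fun b hb => Nat.zero_le b) (Finset.card_pos.mp hω1)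
    have hr : (a+1) * (b+1) ≤ L := hμ ▸ rect_le μ hmem
    rw [Nat.le_div_iff_mul_le (by positivity)]
    have ha : a = 2 * b + n := by omega
    have hb' : ω ≤ b + 1 := by omega
    nlinarith [hr, ha, hb', hω1]
  refine ⟨?_, ?_, hpos, hneg⟩
  · exact hμ ▸ Finset.card_filter_le _ _
  · intro k hk
    rcases lt_or_gt_of_ne hk with hneg' | hpos'
    · have := hneg k hneg'.le
      have h3 : (μ.cells.filter (fun c => 2 * (c.2 : ℤ) - (c.1 : ℤ) = k)).card
          * (k.natAbs + 1) ≤ L := (Nat.le_div_iff_mul_le (by positivity)).mp this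
      rw [Nat.le_div_iff_mul_le (by omega : 0 < k.natAbs)]
      nlinarith [h3]
    · have := hpos k hpos'
      rw [Nat.le_div_iff_mul_le (by positivity)] at this
      rw [Nat.le_div_iff_mul_le (by omega : 0 < k.natAbs)]
      nlinarith [this]
end

section
/- For every real x and every nonnegative integer j, the Chebyshev polynomial of the second kind satisfies |U_j(x/2)| ≤ 2 · max(|x|^j, 1). -/
open Polynomial Polynomial.Chebyshev

/-- Strengthened monotone bound for `T` at arguments `x/2` with `x ≥ 2`. -/
lemma T_half_ge (x : ℝ) (hx : 2 ≤ x) (n : ℕ) :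
    1 ≤ (T ℝ (n : ℤ)).eval (x / 2) ∧
    (T ℝ (n : ℤ)).eval (x / 2) ≤ (T ℝ ((n : ℤ) + 1)).eval (x / 2) ∧
    (T ℝ ((n : ℤ) + 1)).eval (x / 2) ≤ x ^ (n + 1) := by
  induction n with
  | zero =>
    simp only [Nat.cast_zero, T_zero, T_one, Polynomial.eval_one, Polynomial.eval_X, zero_add,
      pow_one]
    refine ⟨le_refl 1, by linarith, by linarith⟩
  | succ n ih =>
    obtain ⟨h1, h2, h3⟩ := ih
    have h1' : (1:ℝ) ≤ (T ℝ ((n : ℤ) + 1)).eval (x / 2) := le_trans h1 h2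
    have hrec : (T ℝ ((n : ℤ) + 2)).eval (x / 2)
        = x * (T ℝ ((n : ℤ) + 1)).eval (x / 2) - (T ℝ (n : ℤ)).eval (x / 2) := by
      have := T_add_two ℝ (n : ℤ)
      rw [this]; simp only [Polynomial.eval_sub, Polynomial.eval_mul, Polynomial.eval_ofNat, Polynomial.eval_X]; ring
    have hcast : ((n + 1 : ℕ) : ℤ) = (n : ℤ) + 1 := by push_cast; ring
    rw [hcast]
    refine ⟨h1', ?_, ?_⟩
    · have : (n:ℤ) + 1 + 1 = (n:ℤ) + 2 := by ring
      rw [this, hrec]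
      nlinarith
    · have : (n:ℤ) + 1 + 1 = (n:ℤ) + 2 := by ring
      rw [this, hrec]
      have : x * (T ℝ ((n : ℤ) + 1)).eval (x / 2) ≤ x * x ^ (n + 1) := by
        apply mul_le_mul_of_nonneg_left h3 (by linarith)
      have hp : x ^ (n + 1 + 1) = x * x ^ (n + 1) := by ring
      linarith

/-- Parity of Chebyshev `T` in its argument. -/
lemma T_neg_arg (y : ℝ) (n : ℕ) :
    (T ℝ (n : ℤ)).eval (-y) = (-1) ^ n * (T ℝ (n : ℤ)).eval y := by
  induction n using Nat.twoStepInduction with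
  | zero => simp
  | one => simp
  | more n ih1 ih2 =>
    have hc : ((n + 2 : ℕ) : ℤ) = (n : ℤ) + 2 := by push_cast; ring
    have hc1 : ((n + 1 : ℕ) : ℤ) = (n : ℤ) + 1 := by push_cast; ring
    rw [hc, T_add_two ℝ (n : ℤ)]
    simp only [Polynomial.eval_sub, Polynomial.eval_mul, Polynomial.eval_ofNat,
      Polynomial.eval_X]
    rw [← hc1] at *
    rw [ih1, ih2]
    ring

/-- `|T_n(x/2)| ≤ max (|x|^n) 1`. -/
lemma abs_T_half_le (x : ℝ) (n : ℕ) :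
    |(T ℝ (n : ℤ)).eval (x / 2)| ≤ max (|x| ^ n) 1 := by
  rcases le_or_gt (|x|) 2 with h | h
  · have h1 : |x / 2| ≤ 1 := by rw [abs_div]; simp; linarith [abs_nonneg x]
    have := Real.cos_arccos (by linarith [abs_le.mp h1] : -1 ≤ x / 2)
      (by linarith [abs_le.mp h1] : x / 2 ≤ 1)
    calc |(T ℝ (n : ℤ)).eval (x / 2)| = |Real.cos ((n : ℤ) * Real.arccos (x / 2))| := by
          rw [← this, T_real_cos, this]
      _ ≤ 1 := Real.abs_cos_le_one _
      _ ≤ max (|x| ^ n) 1 := le_max_right _ _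
  · have key : ∀ z : ℝ, 2 ≤ z → |(T ℝ (n : ℤ)).eval (z / 2)| ≤ z ^ n := by
      intro z hz
      obtain ⟨h1, h2, h3⟩ := T_half_ge z hz n
      rcases n with _ | m
      · simp
      · have hc : ((m + 1 : ℕ) : ℤ) = (m : ℤ) + 1 := by push_cast; ring
        rw [hc]
        obtain ⟨g1, g2, g3⟩ := T_half_ge z hz m
        rw [abs_of_nonneg (by linarith)]
        exact g3
    rcases le_or_gt 0 x with hx | hx
    · have hx2 : 2 ≤ x := le_of_lt (by rwa [abs_of_nonneg hx] at h)
      calc |(T ℝ (n : ℤ)).eval (x / 2)| ≤ x ^ n := key x hx2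
        _ = |x| ^ n := by rw [abs_of_nonneg hx]
        _ ≤ max (|x| ^ n) 1 := le_max_left _ _
    · have hx2 : 2 ≤ -x := by rw [abs_of_neg hx] at h; linarith
      have : x / 2 = -(-x / 2) := by ring
      rw [this, T_neg_arg, abs_mul, abs_pow, abs_neg, abs_one, one_pow, one_mul]
      calc |(T ℝ (n : ℤ)).eval (-x / 2)| ≤ (-x) ^ n := key (-x) hx2
        _ = |x| ^ n := by rw [abs_of_neg hx]
        _ ≤ max (|x| ^ n) 1 := le_max_left _ _

/-- **Bound on Chebyshev polynomials of the second kind.**  For every real `x` and every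
`j ≥ 0`, `|U_j(x/2)| ≤ 2 · max(|x|^j, 1)`. -/
theorem stmt_18 (j : ℕ) (x : ℝ) :
    |(Polynomial.Chebyshev.U ℝ (j : ℤ)).eval (x / 2)| ≤ 2 * max (|x| ^ j) 1 := by
  induction j with
  | zero => simp
  | succ j ih =>
    have hc : ((j + 1 : ℕ) : ℤ) = (j : ℤ) + 1 := by push_cast; ring
    rw [hc, U_eq_X_mul_U_add_T ℝ (j : ℤ)]
    simp only [Polynomial.eval_add, Polynomial.eval_mul, Polynomial.eval_X]
    have hT := abs_T_half_le x (j + 1)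
    rw [hc] at hT
    have hM : |x| * max (|x| ^ j) 1 ≤ max (|x| ^ (j + 1)) 1 := by
      rcases le_or_gt (|x|) 1 with h | h
      · calc |x| * max (|x| ^ j) 1 = |x| * 1 := by
              rw [max_eq_right (pow_le_one₀ (abs_nonneg x) h)]
          _ ≤ 1 := by rw [mul_one]; exact h
          _ ≤ _ := le_max_right _ _
      · have h1 : 1 ≤ |x| ^ j := one_le_pow₀ h.le
        calc |x| * max (|x| ^ j) 1 = |x| * |x| ^ j := by rw [max_eq_left h1]
          _ = |x| ^ (j + 1) := by ring
          _ ≤ _ := le_max_left _ _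
    calc |x / 2 * (U ℝ (j : ℤ)).eval (x / 2) + (T ℝ ((j : ℤ) + 1)).eval (x / 2)|
        ≤ |x / 2| * |(U ℝ (j : ℤ)).eval (x / 2)| + |(T ℝ ((j : ℤ) + 1)).eval (x / 2)| := by
          rw [← abs_mul]; exact abs_add_le _ _
      _ ≤ |x| / 2 * (2 * max (|x| ^ j) 1) + max (|x| ^ (j + 1)) 1 := by
          rw [abs_div, abs_two]
          gcongr
      _ = |x| * max (|x| ^ j) 1 + max (|x| ^ (j + 1)) 1 := by ring
      _ ≤ max (|x| ^ (j + 1)) 1 + max (|x| ^ (j + 1)) 1 := by linarith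
      _ = 2 * max (|x| ^ (j + 1)) 1 := by ring
end

section
/- Let h be a real polynomial of degree at most q with Chebyshev expansion h(x) = Σ_{j=0}^q a_j T_j(x/K), let f(θ) = h(K cos θ), and fix nonnegative integers k, l and u > 0 with s = ⌈k + ul⌉. Then Σ_{j=1}^q j^k (1 + log j)^l |a_j| ≤ C (e^u/u)^l · sup_{θ ∈ [0,2π]} |f^(s+1)(θ)| for a universal constant C. -/
/-!
Substituting `x = K cos θ` turns the Chebyshev expansion into the cosine polynomial
`f θ = ∑ a_j cos (j θ)`, so `f^(s+1)` is the cosine polynomial with coefficients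
`b_j = j^(s+1) a_j` (phase-shifted by `(s+1)π/2`). Orthogonality of the cosines on `[0, 2π]`
gives `π ∑ b_j² = ∫ (f^(s+1))² ≤ 2π F²`. Since `1 + log j ≤ (e^u/u) j^u` and `k + u l ≤ s`, the
weight `j^k (1 + log j)^l |a_j|` is at most `(e^u/u)^l |b_j| / j`, and Cauchy–Schwarz against
`∑ 1/j² ≤ 2` bounds the sum of these by `(e^u/u)^l · 2F`.
-/

open Real Finset

lemma one_add_log_le_exp_div_mul_rpow {u x : ℝ} (hu : 0 < u) (hx : 0 < x) :
    1 + log x ≤ exp u / u * x ^ u := by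
  have hexp : exp u * x ^ u = exp (u * (1 + log x)) := by
    rw [rpow_def_of_pos hx, ← exp_add]; ring_nf
  rw [div_mul_eq_mul_div, hexp, le_div_iff₀ hu, mul_comm]
  linarith [add_one_le_exp (u * (1 + log x))]

lemma pow_mul_one_add_log_pow_le {x u : ℝ} (hx : 1 ≤ x) (hu : 0 < u) {k l s : ℕ}
    (hs : (k : ℝ) + u * l ≤ s) :
    x ^ k * (1 + log x) ^ l ≤ (exp u / u) ^ l * x ^ s := by
  have hx0 : 0 < x := by linarith
  calc x ^ k * (1 + log x) ^ l ≤ x ^ k * (exp u / u * x ^ u) ^ l := by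
        gcongr
        · linarith [log_nonneg hx]
        · exact one_add_log_le_exp_div_mul_rpow hu hx0
    _ = (exp u / u) ^ l * x ^ ((k : ℝ) + u * l) := by
        rw [mul_pow, ← rpow_natCast (x ^ u), ← rpow_mul hx0.le, rpow_add hx0, rpow_natCast]
        ring
    _ ≤ (exp u / u) ^ l * x ^ s := by
        rw [← rpow_natCast x s]
        gcongr

lemma eval_mul_cos_eq_sum_mul_cos {h : Polynomial ℝ} {K : ℝ} (hK : 0 < K) {s : Finset ℕ}
    {a : ℕ → ℝ}
    (hcheb : ∀ x ∈ Set.Icc (-K) K,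
      h.eval x = ∑ j ∈ s, a j * (Polynomial.Chebyshev.T ℝ (j : ℤ)).eval (x / K))
    (θ : ℝ) :
    h.eval (K * cos θ) = ∑ j ∈ s, a j * cos (j * θ) := by
  have hx : K * cos θ ∈ Set.Icc (-K) K :=
    ⟨by nlinarith [neg_one_le_cos θ], by nlinarith [cos_le_one θ]⟩
  rw [hcheb _ hx, mul_div_cancel_left₀ _ hK.ne']
  simp only [Polynomial.Chebyshev.T_real_cos, Int.cast_natCast]

lemma deriv_cos_mul_add (j c : ℝ) :
    deriv (fun θ => cos (j * θ + c)) = fun θ => j * cos (j * θ + (c + π / 2)) := by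
  funext θ
  rw [← add_assoc, cos_add_pi_div_two]
  simpa [mul_comm] using (((hasDerivAt_id θ).const_mul j).add_const c).cos.deriv

lemma iteratedDeriv_cos_mul_add (j : ℝ) (n : ℕ) (c : ℝ) :
    iteratedDeriv n (fun θ => cos (j * θ + c)) =
      fun θ => j ^ n * cos (j * θ + (c + n * (π / 2))) := by
  induction n generalizing c with
  | zero => simp
  | succ n ih =>
    funext θ
    rw [iteratedDeriv_succ', deriv_cos_mul_add, iteratedDeriv_const_mul_field, ih]
    push_cast
    ring_nf

lemma iteratedDeriv_sum_mul_cos (s : Finset ℕ) (a : ℕ → ℝ) (n : ℕ) (θ : ℝ) :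
    iteratedDeriv n (fun θ => ∑ j ∈ s, a j * cos (j * θ)) θ =
      ∑ j ∈ s, a j * j ^ n * cos (j * θ + n * (π / 2)) := by
  rw [iteratedDeriv_fun_sum fun j _ => by fun_prop]
  refine sum_congr rfl fun j _ => ?_
  have := congrFun (iteratedDeriv_cos_mul_add j n 0) θ
  simp only [add_zero, zero_add] at this
  rw [iteratedDeriv_const_mul_field, this, mul_assoc]

lemma integral_cos_int_mul_add {m : ℤ} (hm : m ≠ 0) (d : ℝ) :
    ∫ θ in (0 : ℝ)..2 * π, cos (m * θ + d) = 0 := by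
  rw [intervalIntegral.integral_comp_mul_add cos (Int.cast_ne_zero.2 hm), integral_cos,
    show (m : ℝ) * (2 * π) + d = d + m * (2 * π) by ring, sin_add_int_mul_two_pi]
  simp

lemma integral_cos_mul_add_mul_cos_mul_add {i j : ℕ} (hij : i + j ≠ 0) (c : ℝ) :
    ∫ θ in (0 : ℝ)..2 * π, cos (i * θ + c) * cos (j * θ + c) = if i = j then π else 0 := by
  have prod_to_sum : ∀ θ : ℝ, cos (i * θ + c) * cos (j * θ + c) =
      (cos (((i - j : ℤ) : ℝ) * θ + 0) + cos (((i + j : ℤ) : ℝ) * θ + 2 * c)) / 2 := by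
    intro θ
    push_cast
    rw [show (i - j : ℝ) * θ + 0 = (i * θ + c) - (j * θ + c) by ring,
      show (i + j : ℝ) * θ + 2 * c = (i * θ + c) + (j * θ + c) by ring,
      cos_sub (i * θ + c), cos_add (i * θ + c)]
    ring
  simp_rw [prod_to_sum]
  rw [intervalIntegral.integral_div, intervalIntegral.integral_add
    ((by fun_prop : Continuous _).intervalIntegrable _ _)
    ((by fun_prop : Continuous _).intervalIntegrable _ _),
    integral_cos_int_mul_add (m := i + j) (by omega)]
  split_ifs with h
  · simp [h]
  · rw [integral_cos_int_mul_add (by omega)]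
    simp

lemma integral_sum_mul_cos_sq {s : Finset ℕ} (hs : 0 ∉ s) (b : ℕ → ℝ) (c : ℝ) :
    ∫ θ in (0 : ℝ)..2 * π, (∑ j ∈ s, b j * cos (j * θ + c)) ^ 2 = π * ∑ j ∈ s, b j ^ 2 := by
  simp_rw [sq, sum_mul_sum]
  rw [intervalIntegral.integral_finsetSum fun i _ => (by fun_prop : Continuous _).intervalIntegrable _ _,
    mul_sum]
  refine sum_congr rfl fun i hi => ?_
  rw [intervalIntegral.integral_finsetSum fun j _ => (by fun_prop : Continuous _).intervalIntegrable _ _]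
  simp_rw [mul_mul_mul_comm (b i), intervalIntegral.integral_const_mul]
  rw [sum_congr rfl fun j hj => by
    rw [integral_cos_mul_add_mul_cos_mul_add (by grind) c]]
  simp only [mul_ite, mul_zero, sum_ite_eq, hi, ↓reduceIte]
  ring

lemma sum_sq_le_of_abs_sum_mul_cos_le {s : Finset ℕ} (hs : 0 ∉ s) (b : ℕ → ℝ) (c : ℝ) {F : ℝ}
    (hF : ∀ θ ∈ Set.Icc 0 (2 * π), |∑ j ∈ s, b j * cos (j * θ + c)| ≤ F) :
    ∑ j ∈ s, b j ^ 2 ≤ 2 * F ^ 2 := by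
  refine le_of_mul_le_mul_left ?_ pi_pos
  rw [← integral_sum_mul_cos_sq hs]
  calc _ ≤ ∫ _ in (0 : ℝ)..2 * π, F ^ 2 :=
        intervalIntegral.integral_mono_on (by positivity)
          ((by fun_prop : Continuous _).intervalIntegrable _ _) intervalIntegrable_const
          fun θ hθ => sq_le_sq' (abs_le.1 (hF θ hθ)).1 (abs_le.1 (hF θ hθ)).2
    _ = π * (2 * F ^ 2) := by
        simp only [intervalIntegral.integral_const, sub_zero, smul_eq_mul]
        ring

lemma sum_abs_div_le_of_sum_sq_le (q : ℕ) (b : ℕ → ℝ) {F : ℝ} (hF : 0 ≤ F)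
    (h : ∑ j ∈ Icc 1 q, b j ^ 2 ≤ 2 * F ^ 2) : ∑ j ∈ Icc 1 q, |b j| / j ≤ 2 * F := by
  have hinv : ∑ j ∈ Icc 1 q, ((j : ℝ)⁻¹) ^ 2 ≤ 2 := by
    have hIoo : Ioo 0 (q + 1) = Icc 1 q := by ext; simp only [mem_Ioo, mem_Icc]; omega
    simpa [hIoo, inv_pow] using sum_Ioo_inv_sq_le (α := ℝ) 0 (q + 1)
  refine (abs_le_of_sq_le_sq' ?_ (by positivity)).2
  calc (∑ j ∈ Icc 1 q, |b j| / j) ^ 2 = (∑ j ∈ Icc 1 q, (j : ℝ)⁻¹ * |b j|) ^ 2 := by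
        simp_rw [div_eq_inv_mul]
    _ ≤ (∑ j ∈ Icc 1 q, ((j : ℝ)⁻¹) ^ 2) * ∑ j ∈ Icc 1 q, |b j| ^ 2 :=
        sum_mul_sq_le_sq_mul_sq _ _ _
    _ ≤ 2 * (2 * F ^ 2) := by
        simp only [sq_abs]
        gcongr
    _ = (2 * F) ^ 2 := by ring

/-- **Chebyshev coefficient bounds with logarithmic factors.**  Let `h` be a real
polynomial of degree at most `q` with Chebyshev expansion `h(x) = ∑_{j=0}^q a_j T_j(x/K)`
on `[-K, K]`, let `f(θ) = h(K cos θ)`, fix `k, l ≥ 0` and `u > 0`, and set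
`s = ⌈k + ul⌉`.  Then `∑_{j=1}^q j^k (1 + log j)^l |a_j| ≤ C (e^u/u)^l ·
sup_{[0,2π]} |f^(s+1)|` for a universal constant `C`. -/
theorem stmt_19 :
    ∃ C : ℝ, 0 < C ∧
      ∀ (q : ℕ) (h : Polynomial ℝ) (K : ℝ) (a : ℕ → ℝ) (k l : ℕ) (u : ℝ),
        h.natDegree ≤ q → 0 < K → 0 < u →
        (∀ x ∈ Set.Icc (-K) K,
          h.eval x = ∑ j ∈ Finset.range (q + 1),
            a j * (Polynomial.Chebyshev.T ℝ (j : ℤ)).eval (x / K)) →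
        ∀ F : ℝ,
          (∀ θ ∈ Set.Icc (0 : ℝ) (2 * Real.pi),
            |iteratedDeriv (⌈(k : ℝ) + u * l⌉₊ + 1)
              (fun θ => h.eval (K * Real.cos θ)) θ| ≤ F) →
          ∑ j ∈ Finset.Icc 1 q, (j : ℝ) ^ k * (1 + Real.log j) ^ l * |a j| ≤
            C * (Real.exp u / u) ^ l * F := by
  refine ⟨2, two_pos, fun q h K a k l u _ hK hu hcheb F hF => ?_⟩
  set s := ⌈(k : ℝ) + u * l⌉₊
  set b : ℕ → ℝ := fun j => a j * j ^ (s + 1)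
  have hderiv : ∀ θ, iteratedDeriv (s + 1) (fun θ => h.eval (K * cos θ)) θ =
      ∑ j ∈ Icc 1 q, b j * cos (j * θ + (s + 1 : ℕ) * (π / 2)) := fun θ => by
    rw [funext (eval_mul_cos_eq_sum_mul_cos hK hcheb), iteratedDeriv_sum_mul_cos,
      sum_range_eq_add_Ico _ (by omega : 0 < q + 1), Ico_add_one_right_eq_Icc]
    simp [b]
  have hF0 : 0 ≤ F := (abs_nonneg _).trans (hF 0 ⟨le_rfl, by positivity⟩)
  have hb := sum_sq_le_of_abs_sum_mul_cos_le (by simp) b _ fun θ hθ => hderiv θ ▸ hF θ hθ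
  calc ∑ j ∈ Icc 1 q, (j : ℝ) ^ k * (1 + log j) ^ l * |a j|
      ≤ ∑ j ∈ Icc 1 q, (exp u / u) ^ l * (|b j| / j) := sum_le_sum fun j hj => ?_
    _ = (exp u / u) ^ l * ∑ j ∈ Icc 1 q, |b j| / j := (mul_sum ..).symm
    _ ≤ (exp u / u) ^ l * (2 * F) := by gcongr; exact sum_abs_div_le_of_sum_sq_le q b hF0 hb
    _ = 2 * (exp u / u) ^ l * F := by ring
  have hj1 : (1 : ℝ) ≤ j := by exact_mod_cast (mem_Icc.1 hj).1
  calc (j : ℝ) ^ k * (1 + log j) ^ l * |a j| ≤ (exp u / u) ^ l * j ^ s * |a j| :=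
        mul_le_mul_of_nonneg_right (pow_mul_one_add_log_pow_le hj1 hu (Nat.le_ceil _))
          (abs_nonneg _)
    _ = (exp u / u) ^ l * (|b j| / j) := by
        simp only [b, abs_mul, abs_pow, Nat.abs_cast]
        field_simp
        ring
end
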